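/- arXiv:0806.2411 — 6 statements merged into one kernel-verified Lean document; each statement's English description precedes it below -/
import Mathlib

section
/- Let p : (0,∞) → ℝ be C² with p′ < 0 and p″ > 0, let 0 < v₊ < v₋, a = −(v₊ − v₋)/(p(v₊) − p(v₋)), d > 0, and define φ(v) = v(v − v₋ + a(p(v) − p(v₋))) and the energy E(v,w) = w²/2 − (1/d)∫ᵥ^{v₋} φ(s)/s ds. Then: (i) E(v,w) ≥ 0 for all v ∈ [v₊, v₋] and w ∈ ℝ; and (ii) if (v,w) : I → (0,∞) × ℝ is a solution of the first-order system v′ = w, w′ = (1/d)·(w − φ(v))/v on an interval I, then for all x ∈ I, (d/dx) E(v(x), w(x)) = w(x)²/(d·v(x)), which is strictly positive wherever w(x) ≠ 0. -/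
/-!
On `(0, ∞)` one has `φ(s)/s = s - v₋ + a (p(s) - p(v₋))`. Since `p` is decreasing, `a > 0`, so
this is a convex function of `s`; it vanishes at `v₋` and, by the Rankine–Hugoniot condition,
at `v₊`, hence it is nonpositive on `[v₊, v₋]` and the integral term of `E` is nonnegative there.
Along a solution, the fundamental theorem of calculus gives
`dE/dx = w w' + (1/d) (φ(v)/v) w`, and substituting `w'` cancels the `φ` terms, leaving `w²/(d v)`.
-/

open Set intervalIntegral

theorem chord_nonpos_of_convexOn {p : ℝ → ℝ} {x y v : ℝ} (hp : ConvexOn ℝ (Icc x y) p)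
    (hpxy : p y < p x) (hv : v ∈ Icc x y) :
    v - y + (-(x - y) / (p x - p y)) * (p v - p y) ≤ 0 := by
  set a := -(x - y) / (p x - p y)
  have hxy : x ≤ y := hv.1.trans hv.2
  have ha : 0 ≤ a := div_nonneg (by linarith) (by linarith)
  have hconv : ConvexOn ℝ (Icc x y) fun s => s - y + a * (p s - p y) := by
    refine (((convexOn_id (convex_Icc x y)).add (hp.smul ha)).add_const (-y - a * p y)).congr
      fun s _ => ?_
    simp only [Pi.add_apply, id_eq, smul_eq_mul]
    ring
  have hx : x - y + a * (p x - p y) = 0 := by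
    simp only [a]
    field_simp [(sub_pos.mpr hpxy).ne']
    ring
  simpa [hx] using hconv.le_on_segment (left_mem_Icc.mpr hxy) (right_mem_Icc.mpr hxy)
    (by rwa [segment_eq_Icc hxy])

theorem hasDerivAt_integral_left_of_continuousOn {f : ℝ → ℝ} {U : Set ℝ} {u c : ℝ}
    (hU : IsOpen U) (hf : ContinuousOn f U) (huc : uIcc u c ⊆ U) :
    HasDerivAt (fun t => ∫ s in t..c, f s) (-f u) u :=
  integral_hasDerivAt_left (hf.mono huc).intervalIntegrable
    (hf.stronglyMeasurableAtFilter hU u (huc left_mem_uIcc))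
    (hf.continuousAt (hU.mem_nhds (huc left_mem_uIcc)))

noncomputable def profileEnergy (φ : ℝ → ℝ) (c d v w : ℝ) : ℝ :=
  w ^ 2 / 2 - (1 / d) * ∫ s in v..c, φ s / s

section profileEnergy

variable {φ : ℝ → ℝ} {c d : ℝ}

theorem profileEnergy_nonneg {v : ℝ} (hd : 0 ≤ d) (hvc : v ≤ c)
    (hφ : ∀ s ∈ Icc v c, φ s / s ≤ 0) (w : ℝ) : 0 ≤ profileEnergy φ c d v w := by
  have hint : ∫ s in v..c, φ s / s ≤ 0 := by
    simpa [intervalIntegral.integral_neg] using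
      integral_nonneg hvc fun s hs => neg_nonneg.mpr (hφ s hs)
  have hw : 0 ≤ w ^ 2 / 2 := by positivity
  have := mul_nonpos_of_nonneg_of_nonpos (one_div_nonneg.mpr hd) hint
  unfold profileEnergy
  linarith

theorem hasDerivAt_profileEnergy {V W : ℝ → ℝ} {x : ℝ} (hφ : ContinuousOn φ (Ioi 0))
    (hc : 0 < c) (hVx : 0 < V x) (hV : HasDerivAt V (W x) x)
    (hW : HasDerivAt W ((1 / d) * ((W x - φ (V x)) / V x)) x) :
    HasDerivAt (fun y => profileEnergy φ c d (V y) (W y)) (W x ^ 2 / (d * V x)) x := by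
  have hquot : ContinuousOn (fun s => φ s / s) (Ioi 0) :=
    hφ.div continuousOn_id fun s hs => (mem_Ioi.mp hs).ne'
  have hint := (hasDerivAt_integral_left_of_continuousOn isOpen_Ioi hquot
    (ordConnected_Ioi.uIcc_subset hVx hc)).comp x hV
  refine (((hW.pow 2).div_const 2).sub (hint.const_mul (1 / d))).congr_deriv ?_
  simp only [Nat.cast_ofNat, Nat.add_one_sub_one, pow_one]
  ring

end profileEnergy

theorem energy_lyapunov_general
    (p p' p'' : ℝ → ℝ)
    (hp'd : ∀ v ∈ Ioi (0:ℝ), HasDerivAt p (p' v) v)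
    (hp''d : ∀ v ∈ Ioi (0:ℝ), HasDerivAt p' (p'' v) v)
    (hp'neg : ∀ v ∈ Ioi (0:ℝ), p' v < 0)
    (hp''pos : ∀ v ∈ Ioi (0:ℝ), 0 < p'' v)
    (vp vm a d : ℝ)
    (hvp : 0 < vp) (hvlt : vp < vm) (hd : 0 < d)
    (ha : a = -(vp - vm) / (p vp - p vm))
    (φ : ℝ → ℝ)
    (hφ : ∀ v, φ v = v * (v - vm + a * (p v - p vm)))
    (E : ℝ → ℝ → ℝ)
    (hE : ∀ v w, E v w = w ^ 2 / 2 - (1 / d) * ∫ s in v..vm, φ s / s) :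
    (∀ v ∈ Icc vp vm, ∀ w : ℝ, 0 ≤ E v w) ∧
    (∀ I : Set ℝ, I.OrdConnected → ∀ V W : ℝ → ℝ,
      (∀ x ∈ I, 0 < V x) →
      (∀ x ∈ I, HasDerivAt V (W x) x) →
      (∀ x ∈ I, HasDerivAt W ((1 / d) * ((W x - φ (V x)) / V x)) x) →
      ∀ x ∈ I,
        HasDerivAt (fun y => E (V y) (W y)) ((W x) ^ 2 / (d * V x)) x ∧
        (W x ≠ 0 → 0 < (W x) ^ 2 / (d * V x))) := by
  have hpc : ContinuousOn p (Ioi 0) := fun v hv => (hp'd v hv).continuousAt.continuousWithinAt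
  have hp_convex : ConvexOn ℝ (Ioi 0) p :=
    convexOn_of_hasDerivWithinAt2_nonneg (convex_Ioi 0) hpc
      (fun v hv => (hp'd v (interior_subset hv)).hasDerivWithinAt)
      (fun v hv => (hp''d v (interior_subset hv)).hasDerivWithinAt)
      (fun v hv => (hp''pos v (interior_subset hv)).le)
  have hp_anti : p vm < p vp :=
    strictAntiOn_of_hasDerivWithinAt_neg (convex_Ioi 0) hpc
      (fun v hv => (hp'd v (interior_subset hv)).hasDerivWithinAt)
      (fun v hv => hp'neg v (interior_subset hv)) hvp (hvp.trans hvlt) hvlt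
  have hφc : ContinuousOn φ (Ioi 0) := by
    rw [funext hφ]
    fun_prop
  obtain rfl : E = profileEnergy φ vm d := funext₂ hE
  refine ⟨fun v hv w => profileEnergy_nonneg hd.le hv.2 (fun s hs => ?_) w,
    fun I _ V W hV hVd hWd x hx =>
      ⟨hasDerivAt_profileEnergy hφc (hvp.trans hvlt) (hV x hx) (hVd x hx) (hWd x hx),
        fun hW => div_pos (sq_pos_of_ne_zero hW) (mul_pos hd (hV x hx))⟩⟩
  have hs : s ∈ Icc vp vm := ⟨hv.1.trans hs.1, hs.2⟩
  rw [hφ, mul_div_cancel_left₀ _ (hvp.trans_le hs.1).ne', ha]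
  exact chord_nonpos_of_convexOn (hp_convex.subset (fun t ht => hvp.trans_le ht.1)
    (convex_Icc vp vm)) hp_anti hs

/-- The energy `E(v,w) = w²/2 − (1/d)∫_v^{vm} φ(s)/s ds` is
nonnegative on `[vp, vm] × ℝ`, and along any solution of the first-order
profile system `v' = w`, `w' = (1/d)(w − φ(v))/v` on an interval `I` one has
`(d/dx) E(v(x), w(x)) = w(x)²/(d v(x))`, strictly positive wherever `w(x) ≠ 0`. -/
theorem energy_lyapunov
    (p p' p'' : ℝ → ℝ)
    (hp'd : ∀ v ∈ Ioi (0:ℝ), HasDerivAt p (p' v) v)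
    (hp''d : ∀ v ∈ Ioi (0:ℝ), HasDerivAt p' (p'' v) v)
    (hp''cont : ContinuousOn p'' (Ioi 0))
    (hp'neg : ∀ v ∈ Ioi (0:ℝ), p' v < 0)
    (hp''pos : ∀ v ∈ Ioi (0:ℝ), 0 < p'' v)
    (vp vm a d : ℝ)
    (hvp : 0 < vp) (hvlt : vp < vm) (hd : 0 < d)
    (ha : a = -(vp - vm) / (p vp - p vm))
    (φ : ℝ → ℝ)
    (hφ : ∀ v, φ v = v * (v - vm + a * (p v - p vm)))
    (E : ℝ → ℝ → ℝ)
    (hE : ∀ v w, E v w = w ^ 2 / 2 - (1 / d) * ∫ s in v..vm, φ s / s) :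
    (∀ v ∈ Icc vp vm, ∀ w : ℝ, 0 ≤ E v w) ∧
    (∀ I : Set ℝ, I.OrdConnected → ∀ V W : ℝ → ℝ,
      (∀ x ∈ I, 0 < V x) →
      (∀ x ∈ I, HasDerivAt V (W x) x) →
      (∀ x ∈ I, HasDerivAt W ((1 / d) * ((W x - φ (V x)) / V x)) x) →
      ∀ x ∈ I,
        HasDerivAt (fun y => E (V y) (W y)) ((W x) ^ 2 / (d * V x)) x ∧
        (W x ≠ 0 → 0 < (W x) ^ 2 / (d * V x))) :=
  energy_lyapunov_general p p' p'' hp'd hp''d hp'neg hp''pos vp vm a d hvp hvlt hd ha φ hφ E hE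
end

section
/- Let p : (0,∞) → ℝ be C² with p′ < 0 and p″ > 0, let 0 < v₊ < v₋, let a = −(v₊ − v₋)/(p(v₊) − p(v₋)), assume 1 + a p′(v₋) > 0, and set d_* = 1/(4 v₋²(1 + a p′(v₋))). If d > d_*, then no shock profile is monotone: every C² solution v̂ of v̂ − v₋ + a(p(v̂) − p(v₋)) = v̂′/v̂ − d v̂″ with v̂(−∞) = v₋, v̂(+∞) = v₊, v̂′(±∞) = 0 satisfies v̂′(x₀) > 0 for some x₀ ∈ ℝ (the profile oscillates about v₋ as x → −∞). -/
/-!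
Suppose `v̂' ≤ 0`. Then `v₊ ≤ v̂ ≤ v₋`, and `v̂` never reaches `v₋`: at such a point `v̂' = 0`, and
since the second-order profile equation is linearly bounded around the rest point `(v₋, 0)`,
Grönwall forces `v̂ ≡ v₋` from there on. Hence `r = v̂' / (v̂ - v₋)` is defined everywhere and
satisfies the Riccati equation `r' = -(r - 1/(2 d v̂))² - q/d`, where `q → g'(v₋) - 1/(4 d v₋²)`
as `x → -∞`, with `g(v) = v - v₋ + a (p v - p v₋)`. This limit is positive exactly when `d > d_*`,
so `r' ≤ -κ (1 + r²)` near `-∞`, and `arctan r` would grow without bound as `x → -∞`.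
-/

open Filter Topology Set Real

theorem eq_of_hasDerivAt_of_abs_deriv2_le {w w' w'' : ℝ → ℝ} {c K x₀ : ℝ}
    (hw : ∀ x, HasDerivAt w (w' x) x) (hw' : ∀ x, HasDerivAt w' (w'' x) x)
    (h₀ : w x₀ = c) (h₀' : w' x₀ = 0)
    (hbound : ∀ x, x₀ ≤ x → |w'' x| ≤ K * max |w x - c| |w' x|) (x : ℝ) (hx : x₀ ≤ x) :
    w x = c := by
  have hzero := eq_zero_of_abs_deriv_le_mul_abs_self_of_eq_zero_right
    (f := fun t => (w t - c, w' t)) (f' := fun t => (w' t, w'' t)) (K := max 1 K)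
    (fun t _ => (((hw t).sub_const c).prodMk (hw' t)).continuousAt.continuousWithinAt)
    (fun t _ => (((hw t).sub_const c).prodMk (hw' t)).hasDerivWithinAt)
    (by simp [h₀, h₀'])
    (fun t ht => by
      have hN : 0 ≤ max |w t - c| |w' t| := le_max_of_le_left (abs_nonneg _)
      simp only [Prod.norm_mk, Real.norm_eq_abs, max_mul_of_nonneg _ _ hN, one_mul]
      exact max_le (le_max_of_le_left (le_max_right _ _)) (le_max_of_le_right (hbound t ht.1)))
    x ⟨hx, le_rfl⟩
  simpa [sub_eq_zero] using congrArg Prod.fst hzero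

theorem exists_abs_sub_le_mul_abs_sub {f f' : ℝ → ℝ} {a b : ℝ}
    (hf : ∀ x ∈ Icc a b, HasDerivAt f (f' x) x) (hf' : ContinuousOn f' (Icc a b)) :
    ∃ C, ∀ x ∈ Icc a b, ∀ y ∈ Icc a b, |f x - f y| ≤ C * |x - y| := by
  obtain ⟨C, hC⟩ := isCompact_Icc.exists_bound_of_continuousOn hf'
  exact ⟨C, fun x hx y hy => (convex_Icc a b).norm_image_sub_le_of_norm_hasDerivWithin_le
    (fun z hz => (hf z hz).hasDerivWithinAt) hC hy hx⟩

theorem neg_sq_sub_sub_le_neg_mul_one_add_sq {r h H c : ℝ} (hc : 0 < c) (hh : |h| ≤ H) :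
    -(r - h) ^ 2 - c ≤ -min (1 / 2) (c / (1 + 2 * H ^ 2)) * (1 + r ^ 2) := by
  set κ := min (1 / 2) (c / (1 + 2 * H ^ 2))
  have hκ₀ : 0 ≤ κ := le_min (by norm_num) (by positivity)
  have hκc : κ * (1 + 2 * H ^ 2) ≤ c :=
    (le_div_iff₀ (by positivity)).1 (min_le_right _ _)
  have hh2 : h ^ 2 ≤ H ^ 2 := sq_le_sq' (abs_le.1 hh).1 (abs_le.1 hh).2
  have hr2 : r ^ 2 ≤ 2 * (r - h) ^ 2 + 2 * h ^ 2 := by nlinarith [sq_nonneg (r - 2 * h)]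
  nlinarith [min_le_left (1 / 2 : ℝ) (c / (1 + 2 * H ^ 2)), mul_le_mul_of_nonneg_left hr2 hκ₀,
    mul_le_mul_of_nonneg_left hh2 hκ₀, sq_nonneg (r - h)]

theorem exists_neg_mul_one_add_sq_lt_deriv {r r' : ℝ → ℝ} {κ : ℝ} (hκ : 0 < κ)
    (hr : ∀ x, HasDerivAt r (r' x) x) (x₁ : ℝ) : ∃ x ≤ x₁, -κ * (1 + r x ^ 2) < r' x := by
  by_contra! h
  have hF : ∀ x, HasDerivAt (fun y => arctan (r y) + κ * y) (1 / (1 + r x ^ 2) * r' x + κ) x :=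
    fun x => by simpa using (hr x).arctan.fun_add ((hasDerivAt_id x).const_mul κ)
  have hanti : AntitoneOn (fun y => arctan (r y) + κ * y) (Iic x₁) := by
    refine antitoneOn_of_hasDerivWithinAt_nonpos (convex_Iic x₁)
      (fun x _ => (hF x).continuousAt.continuousWithinAt) (fun x _ => (hF x).hasDerivWithinAt)
      fun x hx => ?_
    rw [interior_Iic] at hx
    have hpos : 0 < 1 + r x ^ 2 := by positivity
    have := mul_le_mul_of_nonneg_left (h x hx.le) (one_div_pos.2 hpos).le
    rw [show 1 / (1 + r x ^ 2) * (-κ * (1 + r x ^ 2)) = -κ by field_simp] at this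
    linarith
  have hπκ : 0 < π / κ := div_pos pi_pos hκ
  have hle := hanti (show x₁ - π / κ ∈ Iic x₁ from sub_le_self _ hπκ.le) self_mem_Iic
    (sub_le_self _ hπκ.le)
  have : κ * (x₁ - π / κ) = κ * x₁ - π := by field_simp
  simp only [this] at hle
  linarith [arctan_lt_pi_div_two (r (x₁ - π / κ)), neg_pi_div_two_lt_arctan (r x₁)]

section Profile

variable {g : ℝ → ℝ} {d vm : ℝ} {v v' v'' : ℝ → ℝ}

theorem profile_eq_of_le_of_eq {vp C x₀ : ℝ} (hvp : 0 < vp) (hd : 0 < d)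
    (hv : ∀ x, HasDerivAt v (v' x) x) (hv' : ∀ x, HasDerivAt v' (v'' x) x)
    (hprof : ∀ x, g (v x) = v' x / v x - d * v'' x)
    (hlow : ∀ x, vp ≤ v x) (hup : ∀ x, v x ≤ vm) (hg : ∀ x, |g (v x)| ≤ C * |v x - vm|)
    (hx₀ : v x₀ = vm) (x : ℝ) (hx : x₀ ≤ x) : v x = vm := by
  have hmax : IsLocalMax v x₀ := Eventually.of_forall fun y => (hup y).trans_eq hx₀.symm
  refine eq_of_hasDerivAt_of_abs_deriv2_le (K := (1 / vp + |C|) / d) hv hv' hx₀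
    (hmax.hasDerivAt_eq_zero (hv x₀)) (fun y _ => ?_) x hx
  have hvy : 0 < v y := hvp.trans_le (hlow y)
  have hv'' : v'' y = (v' y / v y - g (v y)) / d := by
    rw [hprof y]; field_simp; ring
  have hdiv : |v' y / v y| ≤ |v' y| / vp := by
    rw [abs_div, abs_of_pos hvy]
    exact div_le_div_of_nonneg_left (abs_nonneg _) hvp (hlow y)
  set N := max |v y - vm| |v' y|
  calc |v'' y| = |v' y / v y - g (v y)| / d := by rw [hv'', abs_div, abs_of_pos hd]
    _ ≤ (|v' y| / vp + |C| * |v y - vm|) / d := by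
        refine div_le_div_of_nonneg_right ?_ hd.le
        exact (abs_sub _ _).trans (add_le_add hdiv ((hg y).trans
          (mul_le_mul_of_nonneg_right (le_abs_self C) (abs_nonneg _))))
    _ ≤ (1 / vp + |C|) / d * N := by
        rw [div_mul_eq_mul_div]
        refine div_le_div_of_nonneg_right ?_ hd.le
        rw [add_mul, div_eq_mul_one_div, mul_comm (|v' y|)]
        gcongr
        exacts [le_max_right _ _, le_max_left _ _]

theorem profile_exists_eq_of_tendsto_atBot {b : ℝ} (hd : 0 < d) (hvm : 0 < vm)
    (hg : HasDerivAt g b vm) (hgvm : g vm = 0) (hb : 1 / (4 * d * vm ^ 2) < b)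
    (hv : ∀ x, HasDerivAt v (v' x) x) (hv' : ∀ x, HasDerivAt v' (v'' x) x)
    (hprof : ∀ x, g (v x) = v' x / v x - d * v'' x) (hpos : ∀ x, 0 < v x)
    (hlim : Tendsto v atBot (𝓝 vm)) : ∃ x, v x = vm := by
  by_contra! hne
  have hu : ∀ x, v x - vm ≠ 0 := fun x => sub_ne_zero.2 (hne x)
  set r := fun x => v' x / (v x - vm)
  set h := fun x => 1 / (2 * d * v x)
  set q := fun x => g (v x) / (v x - vm) - 1 / (4 * d * v x ^ 2)
  have hr : ∀ x, HasDerivAt r (-(r x - h x) ^ 2 - q x / d) x := fun x => by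
    refine ((hv' x).div ((hv x).sub_const vm) (hu x)).congr_deriv ?_
    have := hpos x
    have := hu x
    simp only [r, h, q, hprof x]
    field_simp
    ring
  have hslope : Tendsto (fun x => g (v x) / (v x - vm)) atBot (𝓝 b) := by
    have hv_ne : Tendsto v atBot (𝓝[≠] vm) :=
      tendsto_nhdsWithin_of_tendsto_nhds_of_eventually_within _ hlim (.of_forall hne)
    refine ((hasDerivAt_iff_tendsto_slope.1 hg).comp hv_ne).congr fun x => ?_
    simp [slope_def_field, hgvm]
  set L := b - 1 / (4 * d * vm ^ 2)
  have hL : 0 < L := sub_pos.2 hb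
  have hq : Tendsto q atBot (𝓝 L) :=
    hslope.sub (tendsto_const_nhds.div ((hlim.pow 2).const_mul (4 * d)) (by positivity))
  have hh : Tendsto (fun x => |h x|) atBot (𝓝 |1 / (2 * d * vm)|) :=
    (tendsto_const_nhds.div (hlim.const_mul (2 * d)) (by positivity)).abs
  obtain ⟨x₁, hx₁⟩ := eventually_atBot.1
    ((hq.eventually (eventually_gt_nhds (half_lt_self hL))).and
      (hh.eventually (eventually_lt_nhds (lt_add_one _))))
  have hc : 0 < L / 2 / d := div_pos (half_pos hL) hd
  set H := |1 / (2 * d * vm)| + 1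
  obtain ⟨x, hx, hlt⟩ := exists_neg_mul_one_add_sq_lt_deriv
    (lt_min one_half_pos (div_pos hc (by positivity : 0 < 1 + 2 * H ^ 2))) hr x₁
  refine hlt.not_ge ((sub_le_sub_left ?_ _).trans
    (neg_sq_sub_sub_le_neg_mul_one_add_sq hc (hx₁ x hx).2.le))
  exact div_le_div_of_nonneg_right (hx₁ x hx).1.le hd.le

end Profile

theorem nonmonotone_above_dstar_general
    (p p' p'' : ℝ → ℝ)
    (hp'd : ∀ v ∈ Ioi (0:ℝ), HasDerivAt p (p' v) v)
    (hp''d : ∀ v ∈ Ioi (0:ℝ), HasDerivAt p' (p'' v) v)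
    (vp vm a d : ℝ)
    (hvp : 0 < vp) (hvlt : vp < vm)
    (hb : 0 < 1 + a * p' vm)
    (dstar : ℝ) (hdstar : dstar = 1 / (4 * vm ^ 2 * (1 + a * p' vm)))
    (hdgt : dstar < d)
    (vhat vhat' vhat'' : ℝ → ℝ)
    (hpos : ∀ x, 0 < vhat x)
    (hder1 : ∀ x, HasDerivAt vhat (vhat' x) x)
    (hder2 : ∀ x, HasDerivAt vhat' (vhat'' x) x)
    (hprof : ∀ x, vhat x - vm + a * (p (vhat x) - p vm) = vhat' x / vhat x - d * vhat'' x)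
    (hlim_m : Tendsto vhat atBot (𝓝 vm))
    (hlim_p : Tendsto vhat atTop (𝓝 vp)) :
    ∃ x₀, 0 < vhat' x₀ := by
  by_contra! hmono
  have hvm : 0 < vm := hvp.trans hvlt
  have hd : 0 < d := (show 0 < dstar by rw [hdstar]; positivity).trans hdgt
  have hb' : 1 / (4 * d * vm ^ 2) < 1 + a * p' vm := by
    rw [hdstar, div_lt_iff₀ (by positivity)] at hdgt
    rw [div_lt_iff₀ (by positivity)]
    linarith
  have hanti : Antitone vhat := antitone_of_hasDerivAt_nonpos hder1 hmono
  have hup : ∀ x, vhat x ≤ vm := hanti.ge_of_tendsto hlim_m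
  have hlow : ∀ x, vp ≤ vhat x := hanti.le_of_tendsto hlim_p
  set g := fun u => u - vm + a * (p u - p vm)
  have hg : ∀ u ∈ Ioi (0:ℝ), HasDerivAt g (1 + a * p' u) u := fun u hu =>
    ((hasDerivAt_id u).sub_const vm).add (((hp'd u hu).sub_const (p vm)).const_mul a)
  have hIcc : Icc vp vm ⊆ Ioi 0 := fun u hu => hvp.trans_le hu.1
  obtain ⟨C, hC⟩ := exists_abs_sub_le_mul_abs_sub (fun u hu => hg u (hIcc hu))
    (continuousOn_const.add (continuousOn_const.mul fun u hu =>
      (hp''d u (hIcc hu)).continuousAt.continuousWithinAt))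
  have hgvm : g vm = 0 := by simp [g]
  obtain ⟨x₀, hx₀⟩ := profile_exists_eq_of_tendsto_atBot hd hvm (hg vm hvm) hgvm hb'
    hder1 hder2 hprof hpos hlim_m
  have hconst : ∀ᶠ x in atTop, vhat x = vm := eventually_atTop.2 ⟨x₀,
    profile_eq_of_le_of_eq hvp hd hder1 hder2 hprof hlow hup
      (fun x => by simpa [hgvm] using hC _ ⟨hlow x, hup x⟩ vm ⟨hvlt.le, le_rfl⟩) hx₀⟩
  exact hvlt.ne (tendsto_nhds_unique hlim_p
    (tendsto_const_nhds.congr' (hconst.mono fun _ h => h.symm)))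

/-- If `d > d_* = 1/(4 vm² (1 + a p'(vm)))`, then no shock
profile of Slemrod's model is monotone: every profile satisfies `vhat'(x₀) > 0` for some `x₀`. -/
theorem nonmonotone_above_dstar
    (p p' p'' : ℝ → ℝ)
    (hp'd : ∀ v ∈ Ioi (0:ℝ), HasDerivAt p (p' v) v)
    (hp''d : ∀ v ∈ Ioi (0:ℝ), HasDerivAt p' (p'' v) v)
    (hp''cont : ContinuousOn p'' (Ioi 0))
    (hp'neg : ∀ v ∈ Ioi (0:ℝ), p' v < 0)
    (hp''pos : ∀ v ∈ Ioi (0:ℝ), 0 < p'' v)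
    (vp vm a d : ℝ)
    (hvp : 0 < vp) (hvlt : vp < vm)
    (ha : a = -(vp - vm) / (p vp - p vm))
    (hb : 0 < 1 + a * p' vm)
    (dstar : ℝ) (hdstar : dstar = 1 / (4 * vm ^ 2 * (1 + a * p' vm)))
    (hdgt : dstar < d)
    (vhat vhat' vhat'' : ℝ → ℝ)
    (hpos : ∀ x, 0 < vhat x)
    (hder1 : ∀ x, HasDerivAt vhat (vhat' x) x)
    (hder2 : ∀ x, HasDerivAt vhat' (vhat'' x) x)
    (hprof : ∀ x, vhat x - vm + a * (p (vhat x) - p vm) = vhat' x / vhat x - d * vhat'' x)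
    (hlim_m : Tendsto vhat atBot (𝓝 vm))
    (hlim_p : Tendsto vhat atTop (𝓝 vp))
    (hlimd_m : Tendsto vhat' atBot (𝓝 0))
    (hlimd_p : Tendsto vhat' atTop (𝓝 0)) :
    ∃ x₀, 0 < vhat' x₀ :=
  nonmonotone_above_dstar_general p p' p'' hp'd hp''d vp vm a d hvp hvlt hb dstar hdstar hdgt vhat
    vhat' vhat'' hpos hder1 hder2 hprof hlim_m hlim_p
end

section
/- Let v̂ be a shock profile, let λ ∈ ℝ with λ ≥ 0, and let (u, v) be a solution of the integrated eigenvalue system λv + v′ − u′ = 0, λu + u′ − f(v̂)v′ = u″/v̂ − d v‴ (with f(v̂) = −a p′(v̂) − v̂′/v̂², u of class C², v of class C³, and u, u′, u″, v, v′, v″, v‴ square-integrable and tending to 0 at ±∞). Then the integral identity λ ∫_ℝ (2 − v̂′/(2v̂²)) |v|² dx − (a/2) ∫_ℝ p″(v̂) v̂′ |v|² dx + ∫_ℝ |v′|²/v̂ dx = 0 holds. -/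
/-!
Taking the real inner product of the second eigenvalue equation with `v` and substituting
`u' = λ v + v'` exhibits minus the integrand of the identity as the derivative of an explicit
quadratic energy in `u, v, v', v''` with coefficients `p'(v̂)` and `1 / v̂`. This energy tends to
`0` at `±∞` because `u, v, v', v''` do, and the integrand is integrable because its weights are
continuous with finite limits at `±∞`, hence bounded, while `|v|², |v'|²` are integrable. The
fundamental theorem of calculus on `ℝ` then makes the integral vanish.
-/

open Filter Topology Set MeasureTheory
open scoped RealInnerProductSpace

section BoundedOfTendsto

variable {β E : Type*} [TopologicalSpace β] [LinearOrder β] [OrderClosedTopology β]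
  [CompactIccSpace β] [NoMaxOrder β] [NoMinOrder β] [NormedAddCommGroup E]

theorem Continuous.exists_forall_norm_le_of_tendsto {f : β → E} (hf : Continuous f) {a b : E}
    (hbot : Tendsto f atBot (𝓝 a)) (htop : Tendsto f atTop (𝓝 b)) :
    ∃ C, ∀ x, ‖f x‖ ≤ C := by
  obtain ⟨C, hC⟩ := isBounded_iff_forall_norm_le.1 <|
    hf.isBounded_range_iff_isBigO_atTop_atBot.2 ⟨htop.isBigO_one ℝ, hbot.isBigO_one ℝ⟩
  exact ⟨C, fun x => hC _ (mem_range_self x)⟩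

end BoundedOfTendsto

theorem MeasureTheory.Integrable.continuous_mul_of_tendsto {𝕜 : Type*} [NormedRing 𝕜]
    {μ : Measure ℝ} {f g : ℝ → 𝕜} (hg : Integrable g μ) (hf : Continuous f) {a b : 𝕜}
    (hbot : Tendsto f atBot (𝓝 a)) (htop : Tendsto f atTop (𝓝 b)) :
    Integrable (fun x => f x * g x) μ := by
  obtain ⟨C, hC⟩ := hf.exists_forall_norm_le_of_tendsto hbot htop
  exact hg.bdd_mul hf.aestronglyMeasurable (ae_of_all _ hC)

theorem integrable_profile_weights_mul {p'' w w' g : ℝ → ℝ} {s₁ s₂ : ℝ}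
    (hp'' : ContinuousOn p'' (Ioi 0)) (hw : Continuous w) (hw' : Continuous w')
    (hpos : ∀ x, 0 < w x) (hs₁ : 0 < s₁) (hs₂ : 0 < s₂) (hbot : Tendsto w atBot (𝓝 s₁))
    (htop : Tendsto w atTop (𝓝 s₂)) (hbot' : Tendsto w' atBot (𝓝 0))
    (htop' : Tendsto w' atTop (𝓝 0)) (hg : Integrable g) :
    Integrable (fun x => (2 - w' x / (2 * w x ^ 2)) * g x) ∧
      Integrable (fun x => p'' (w x) * w' x * g x) ∧ Integrable (fun x => g x / w x) := by
  have hp''lim {l : Filter ℝ} {s : ℝ} (hs : 0 < s) (h : Tendsto w l (𝓝 s)) :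
      Tendsto (fun x => p'' (w x)) l (𝓝 (p'' s)) :=
    (hp''.continuousAt (Ioi_mem_nhds hs)).tendsto.comp h
  have hweight {l : Filter ℝ} {s : ℝ} (hs : 0 < s) (h : Tendsto w l (𝓝 s))
      (h' : Tendsto w' l (𝓝 0)) :
      Tendsto (fun x => 2 - w' x / (2 * w x ^ 2)) l (𝓝 (2 - 0 / (2 * s ^ 2))) :=
    tendsto_const_nhds.sub (h'.div (tendsto_const_nhds.mul (h.pow 2)) (by positivity))
  refine ⟨hg.continuous_mul_of_tendsto ?_ (hweight hs₁ hbot hbot') (hweight hs₂ htop htop'),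
    hg.continuous_mul_of_tendsto ((hp''.comp_continuous hw hpos).mul hw')
      ((hp''lim hs₁ hbot).mul hbot') ((hp''lim hs₂ htop).mul htop'), ?_⟩
  · exact continuous_const.sub (hw'.div (continuous_const.mul (hw.pow 2))
      fun x => by have := hpos x; positivity)
  · simpa only [div_eq_inv_mul, Pi.inv_apply] using hg.continuous_mul_of_tendsto
      (hw.inv₀ fun x => (hpos x).ne') (hbot.inv₀ hs₁.ne') (htop.inv₀ hs₂.ne')

noncomputable def eigenEnergy (a d lam : ℝ) (q w : ℝ → ℝ) (u v v' v'' : ℝ → ℂ) (x : ℝ) : ℝ :=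
  ‖u x - v x‖ ^ 2 / 2 + ‖v x‖ ^ 2 / 2 + a / 2 * q x * ‖v x‖ ^ 2 - lam / 2 * ‖v x‖ ^ 2 / w x
    - ⟪v' x, v x⟫ / w x + d * ⟪v'' x, v x⟫ - d / 2 * ‖v' x‖ ^ 2

theorem hasDerivAt_eigenEnergy {a d lam : ℝ} {q q' w w' : ℝ → ℝ}
    {u u' u'' v v' v'' v''' : ℝ → ℂ} {x : ℝ} (hw : w x ≠ 0)
    (hq : HasDerivAt q (q' x) x) (hwd : HasDerivAt w (w' x) x) (hu : HasDerivAt u (u' x) x)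
    (hv : HasDerivAt v (v' x) x) (hv' : HasDerivAt v' (v'' x) x)
    (hv'' : HasDerivAt v'' (v''' x) x)
    (heq1 : (lam : ℂ) * v x + v' x - u' x = 0) (hu'' : u'' x = lam * v' x + v'' x)
    (heq2 : (lam : ℂ) * u x + u' x - ((-a * q x - w' x / (w x) ^ 2 : ℝ) : ℂ) * v' x
      = u'' x / ((w x : ℝ) : ℂ) - (d : ℂ) * v''' x) :
    HasDerivAt (eigenEnergy a d lam q w u v v' v'')
      (-(lam * ((2 - w' x / (2 * (w x) ^ 2)) * ‖v x‖ ^ 2) - a / 2 * (q' x * ‖v x‖ ^ 2)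
        + ‖v' x‖ ^ 2 / w x)) x := by
  have hnv := hv.norm_sq
  have H := (((((((hu.sub hv).norm_sq.div_const 2).add (hnv.div_const 2)).add
    ((hq.const_mul (a / 2)).mul hnv)).sub ((hnv.const_mul (lam / 2)).div hwd hw)).sub
    ((hv'.inner ℝ hv).div hwd hw)).add ((hv''.inner ℝ hv).const_mul d)).sub
    (hv'.norm_sq.const_mul (d / 2))
  refine H.congr_deriv ?_
  have hmul (r : ℝ) (z z' : ℂ) : ⟪(r : ℂ) * z, z'⟫ = r * ⟪z, z'⟫ := by
    rw [← Complex.real_smul, real_inner_smul_left]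
  have hmul' (r : ℝ) (z z' : ℂ) : ⟪z, (r : ℂ) * z'⟫ = r * ⟪z, z'⟫ := by
    rw [real_inner_comm, hmul, real_inner_comm]
  have hdiv (r : ℝ) (z z' : ℂ) : ⟪z / (r : ℂ), z'⟫ = ⟪z, z'⟫ / r := by
    rw [div_eq_inv_mul, ← Complex.ofReal_inv, hmul, inv_mul_eq_div]
  have hu' : u' x = lam * v x + v' x := by linear_combination -heq1
  have hpaired := congrArg (fun z => ⟪z, v x⟫) heq2
  simp only [hu', hu'', inner_add_left, inner_sub_left, hmul, hdiv,
    real_inner_self_eq_norm_sq] at hpaired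
  simp only [hu', Pi.sub_apply, inner_sub_left, inner_add_right, inner_sub_right, hmul',
    real_inner_self_eq_norm_sq]
  rw [real_inner_comm (v x) (v' x)] at hpaired ⊢
  rw [real_inner_comm (v' x) (v'' x)]
  field_simp at hpaired ⊢
  linear_combination 2 * hpaired

theorem tendsto_eigenEnergy {l : Filter ℝ} {a d lam q₀ w₀ : ℝ} {q w : ℝ → ℝ}
    {u v v' v'' : ℝ → ℂ} (hw₀ : w₀ ≠ 0) (hq : Tendsto q l (𝓝 q₀)) (hw : Tendsto w l (𝓝 w₀))
    (hu : Tendsto u l (𝓝 0)) (hv : Tendsto v l (𝓝 0)) (hv' : Tendsto v' l (𝓝 0))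
    (hv'' : Tendsto v'' l (𝓝 0)) :
    Tendsto (eigenEnergy a d lam q w u v v' v'') l (𝓝 0) := by
  have hnv := hv.norm.pow 2
  have H := ((((((((hu.sub hv).norm.pow 2).div_const 2).add (hnv.div_const 2)).add
    ((hq.const_mul (a / 2)).mul hnv)).sub ((hnv.const_mul (lam / 2)).div hw hw₀)).sub
    ((hv'.inner hv).div hw hw₀)).add ((hv''.inner hv).const_mul d)).sub
    ((hv'.norm.pow 2).const_mul (d / 2))
  convert H using 1
  · rfl
  · simp

theorem real_spectrum_integral_identity_general
    (p' p'' : ℝ → ℝ)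
    (hp''d : ∀ s ∈ Ioi (0:ℝ), HasDerivAt p' (p'' s) s)
    (hp''cont : ContinuousOn p'' (Ioi 0))
    (vp vm a d : ℝ)
    (hvp : 0 < vp) (hvlt : vp < vm)
    (vhat vhat' vhat'' : ℝ → ℝ)
    (hpos : ∀ x, 0 < vhat x)
    (hder1 : ∀ x, HasDerivAt vhat (vhat' x) x)
    (hder2 : ∀ x, HasDerivAt vhat' (vhat'' x) x)
    (hlim_m : Tendsto vhat atBot (𝓝 vm))
    (hlim_p : Tendsto vhat atTop (𝓝 vp))
    (hlimd_m : Tendsto vhat' atBot (𝓝 0))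
    (hlimd_p : Tendsto vhat' atTop (𝓝 0))
    (lam : ℝ)
    (u u' u'' v v' v'' v''' : ℝ → ℂ)
    (hud1 : ∀ x, HasDerivAt u (u' x) x)
    (hud2 : ∀ x, HasDerivAt u' (u'' x) x)
    (hvd1 : ∀ x, HasDerivAt v (v' x) x)
    (hvd2 : ∀ x, HasDerivAt v' (v'' x) x)
    (hvd3 : ∀ x, HasDerivAt v'' (v''' x) x)
    (hL2 : ∀ g ∈ ([u, u', u'', v, v', v'', v'''] : List (ℝ → ℂ)),
      MemLp g 2 volume)
    (hdecay : ∀ g ∈ ([u, u', u'', v, v', v'', v'''] : List (ℝ → ℂ)),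
      Tendsto g atTop (𝓝 0) ∧ Tendsto g atBot (𝓝 0))
    (heq1 : ∀ x, (lam : ℂ) * v x + v' x - u' x = 0)
    (heq2 : ∀ x, (lam : ℂ) * u x + u' x
        - ((-a * p' (vhat x) - vhat' x / (vhat x) ^ 2 : ℝ) : ℂ) * v' x
      = u'' x / ((vhat x : ℝ) : ℂ) - (d : ℂ) * v''' x) :
    lam * (∫ x, (2 - vhat' x / (2 * (vhat x) ^ 2)) * ‖v x‖ ^ 2)
      - (a / 2) * (∫ x, p'' (vhat x) * vhat' x * ‖v x‖ ^ 2)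
      + (∫ x, ‖v' x‖ ^ 2 / vhat x) = 0 := by
  have hvm : 0 < vm := hvp.trans hvlt
  have hcont : Continuous vhat := continuous_iff_continuousAt.2 fun x => (hder1 x).continuousAt
  have hcont' : Continuous vhat' := continuous_iff_continuousAt.2 fun x => (hder2 x).continuousAt
  have hv := hL2 v (by simp)
  have hv' := hL2 v' (by simp)
  obtain ⟨hI₁, hI₂, -⟩ := integrable_profile_weights_mul hp''cont hcont hcont' hpos hvm hvp
    hlim_m hlim_p hlimd_m hlimd_p ((memLp_two_iff_integrable_sq_norm hv.1).1 hv)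
  obtain ⟨-, -, hI₃⟩ := integrable_profile_weights_mul hp''cont hcont hcont' hpos hvm hvp
    hlim_m hlim_p hlimd_m hlimd_p ((memLp_two_iff_integrable_sq_norm hv'.1).1 hv')
  have hu'' (x : ℝ) : u'' x = lam * v' x + v'' x := by
    have hu' : u' = fun y => lam * v y + v' y := funext fun y => by linear_combination -heq1 y
    exact (hud2 x).unique (hu' ▸ ((hvd1 x).const_mul _).add (hvd2 x))
  have hE (x : ℝ) := hasDerivAt_eigenEnergy (q := fun y => p' (vhat y))
    (q' := fun y => p'' (vhat y) * vhat' y) (hpos x).ne'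
    ((hp''d _ (hpos x)).comp x (hder1 x)) (hder1 x) (hud1 x) (hvd1 x) (hvd2 x) (hvd3 x)
    (heq1 x) (hu'' x) (heq2 x)
  have hI₁₂ := (hI₁.const_mul lam).sub' (hI₂.const_mul (a / 2))
  have key := integral_of_hasDerivAt_of_tendsto hE (hI₁₂.add hI₃).neg
    (tendsto_eigenEnergy hvm.ne' ((hp''d vm hvm).continuousAt.tendsto.comp hlim_m) hlim_m
      (hdecay _ (by simp)).2 (hdecay _ (by simp)).2 (hdecay _ (by simp)).2 (hdecay _ (by simp)).2)
    (tendsto_eigenEnergy hvp.ne' ((hp''d vp hvp).continuousAt.tendsto.comp hlim_p) hlim_p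
      (hdecay _ (by simp)).1 (hdecay _ (by simp)).1 (hdecay _ (by simp)).1 (hdecay _ (by simp)).1)
  rwa [integral_neg, sub_self, neg_eq_zero, integral_add hI₁₂ hI₃,
    integral_sub (hI₁.const_mul lam) (hI₂.const_mul (a / 2)), integral_const_mul,
    integral_const_mul] at key

/-- For a shock profile of Slemrod's model, a real `λ ≥ 0`, and a
solution `(u, v)` of the integrated eigenvalue system, the integral identity
`λ ∫ (2 − vhat'/(2 vhat²))|v|² − (a/2) ∫ p''(vhat) vhat' |v|² + ∫ |v'|²/vhat = 0`
holds. -/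
theorem real_spectrum_integral_identity
    (p p' p'' : ℝ → ℝ)
    (hp'd : ∀ s ∈ Ioi (0:ℝ), HasDerivAt p (p' s) s)
    (hp''d : ∀ s ∈ Ioi (0:ℝ), HasDerivAt p' (p'' s) s)
    (hp''cont : ContinuousOn p'' (Ioi 0))
    (hp'neg : ∀ s ∈ Ioi (0:ℝ), p' s < 0)
    (hp''pos : ∀ s ∈ Ioi (0:ℝ), 0 < p'' s)
    (vp vm a d : ℝ)
    (hvp : 0 < vp) (hvlt : vp < vm) (hd : 0 ≤ d)
    (ha : a = -(vp - vm) / (p vp - p vm))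
    (vhat vhat' vhat'' : ℝ → ℝ)
    (hpos : ∀ x, 0 < vhat x)
    (hder1 : ∀ x, HasDerivAt vhat (vhat' x) x)
    (hder2 : ∀ x, HasDerivAt vhat' (vhat'' x) x)
    (hprof : ∀ x, vhat x - vm + a * (p (vhat x) - p vm) = vhat' x / vhat x - d * vhat'' x)
    (hlim_m : Tendsto vhat atBot (𝓝 vm))
    (hlim_p : Tendsto vhat atTop (𝓝 vp))
    (hlimd_m : Tendsto vhat' atBot (𝓝 0))
    (hlimd_p : Tendsto vhat' atTop (𝓝 0))
    (lam : ℝ) (hlam : 0 ≤ lam)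
    (u u' u'' v v' v'' v''' : ℝ → ℂ)
    (hud1 : ∀ x, HasDerivAt u (u' x) x)
    (hud2 : ∀ x, HasDerivAt u' (u'' x) x)
    (hvd1 : ∀ x, HasDerivAt v (v' x) x)
    (hvd2 : ∀ x, HasDerivAt v' (v'' x) x)
    (hvd3 : ∀ x, HasDerivAt v'' (v''' x) x)
    (hL2 : ∀ g ∈ ([u, u', u'', v, v', v'', v'''] : List (ℝ → ℂ)),
      MemLp g 2 volume)
    (hdecay : ∀ g ∈ ([u, u', u'', v, v', v'', v'''] : List (ℝ → ℂ)),
      Tendsto g atTop (𝓝 0) ∧ Tendsto g atBot (𝓝 0))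
    (heq1 : ∀ x, (lam : ℂ) * v x + v' x - u' x = 0)
    (heq2 : ∀ x, (lam : ℂ) * u x + u' x
        - ((-a * p' (vhat x) - vhat' x / (vhat x) ^ 2 : ℝ) : ℂ) * v' x
      = u'' x / ((vhat x : ℝ) : ℂ) - (d : ℂ) * v''' x) :
    lam * (∫ x, (2 - vhat' x / (2 * (vhat x) ^ 2)) * ‖v x‖ ^ 2)
      - (a / 2) * (∫ x, p'' (vhat x) * vhat' x * ‖v x‖ ^ 2)
      + (∫ x, ‖v' x‖ ^ 2 / vhat x) = 0 :=
  real_spectrum_integral_identity_general p' p'' hp''d hp''cont vp vm a d hvp hvlt vhat vhat' vhat''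
    hpos hder1 hder2 hlim_m hlim_p hlimd_m hlimd_p lam u u' u'' v v' v'' v''' hud1 hud2 hvd1 hvd2
    hvd3 hL2 hdecay heq1 heq2
end

section
/- Let v̂ be a monotone shock profile (v̂′(x) < 0 for all x), and let λ ∈ ℝ with λ ≥ 0. If (u, v) solves the integrated eigenvalue system λv + v′ − u′ = 0, λu + u′ − f(v̂)v′ = u″/v̂ − d v‴ (with f(v̂) = −a p′(v̂) − v̂′/v̂², u of class C², v of class C³, and u, u′, u″, v, v′, v″, v‴ square-integrable and tending to 0 at ±∞), then u ≡ 0 and v ≡ 0. In particular, monotone shocks of Slemrod's model have no unstable real spectrum, regardless of amplitude. -/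
/-!
Energy estimate. As `λ` and all coefficients are real, the system makes sense for functions
with values in any real inner product space, `ℂ` being one. Along a solution the energy
`slemrodEnergy` satisfies `E' = -N` with `N = slemrodDissipation`, a sum of nonnegative terms
when `λ ≥ 0` and `v̂' < 0`, one of which is `a p''(v̂) (-v̂') ‖v‖² / 2` with a positive
coefficient (`a > 0` because `p` is decreasing). The energy vanishes at `±∞`, so being
antitone it vanishes identically; hence so does `N`, which forces `v = 0`, then `u' = 0`, and
`u = 0` by its decay.
-/

open Filter Topology Set MeasureTheory
open scoped RealInnerProductSpace

theorem eq_zero_of_hasDerivAt_neg_of_tendsto_zero {F N : ℝ → ℝ}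
    (hF : ∀ x, HasDerivAt F (-N x) x) (hN : ∀ x, 0 ≤ N x)
    (htop : Tendsto F atTop (𝓝 0)) (hbot : Tendsto F atBot (𝓝 0)) (x : ℝ) : N x = 0 := by
  have hanti : Antitone F := antitone_of_hasDerivAt_nonpos hF fun y => neg_nonpos.2 (hN y)
  have hzero : F = 0 := funext fun y => le_antisymm
    (ge_of_tendsto hbot (eventually_atBot.2 ⟨y, fun _ hc => hanti hc⟩))
    (le_of_tendsto htop (eventually_atTop.2 ⟨y, fun _ hc => hanti hc⟩))
  have h := hF x
  rw [hzero] at h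
  simpa using (hasDerivAt_const x (0 : ℝ)).unique h

theorem eq_zero_of_hasDerivAt_zero_of_tendsto_zero {E : Type*} [NormedAddCommGroup E]
    [NormedSpace ℝ E] {u : ℝ → E} (hu : ∀ x, HasDerivAt u 0 x)
    (hlim : Tendsto u atTop (𝓝 0)) (x : ℝ) : u x = 0 := by
  have hconst : u = fun _ => u x := funext fun y =>
    is_const_of_deriv_eq_zero (fun z => (hu z).differentiableAt) (fun z => (hu z).deriv) y x
  rw [hconst] at hlim
  exact tendsto_nhds_unique tendsto_const_nhds hlim

section Slemrod

variable {E : Type*} [NormedAddCommGroup E]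

noncomputable def slemrodDissipation (a lam : ℝ) (p'' vhat vhat' : ℝ → ℝ) (v v' : ℝ → E)
    (x : ℝ) : ℝ :=
  2 * lam * ‖v x‖ ^ 2 + a * p'' (vhat x) * -vhat' x * ‖v x‖ ^ 2 / 2
    + lam * -vhat' x * ‖v x‖ ^ 2 / (2 * vhat x ^ 2) + ‖v' x‖ ^ 2 / vhat x

variable {a lam d : ℝ} {p' p'' vhat vhat' : ℝ → ℝ} {u u' u'' v v' v'' v''' : ℝ → E}

theorem le_slemrodDissipation {x : ℝ} (hlam : 0 ≤ lam) (hvhat : 0 < vhat x)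
    (hmono : vhat' x ≤ 0) :
    a * p'' (vhat x) * -vhat' x * ‖v x‖ ^ 2 / 2
      ≤ slemrodDissipation a lam p'' vhat vhat' v v' x := by
  have hmono' : 0 ≤ -vhat' x := neg_nonneg.2 hmono
  have h1 : 0 ≤ 2 * lam * ‖v x‖ ^ 2 := by positivity
  have h2 : 0 ≤ lam * -vhat' x * ‖v x‖ ^ 2 / (2 * vhat x ^ 2) := by positivity
  have h3 : 0 ≤ ‖v' x‖ ^ 2 / vhat x := by positivity
  unfold slemrodDissipation
  linarith

variable [InnerProductSpace ℝ E]

noncomputable def slemrodEnergy (a lam d : ℝ) (p' vhat : ℝ → ℝ) (u v v' v'' : ℝ → E)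
    (x : ℝ) : ℝ :=
  ‖v x - u x‖ ^ 2 / 2 + ‖v x‖ ^ 2 / 2 + a * p' (vhat x) * ‖v x‖ ^ 2 / 2
    - lam * ‖v x‖ ^ 2 / (2 * vhat x) - ⟪v x, v' x⟫ / vhat x
    + d * (⟪v x, v'' x⟫ - ‖v' x‖ ^ 2 / 2)

theorem hasDerivAt_slemrodEnergy {x : ℝ} (hvhat : 0 < vhat x)
    (hp' : HasDerivAt p' (p'' (vhat x)) (vhat x)) (hder : HasDerivAt vhat (vhat' x) x)
    (hu : HasDerivAt u (u' x) x) (hu' : HasDerivAt u' (u'' x) x)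
    (hv : HasDerivAt v (v' x) x) (hv' : HasDerivAt v' (v'' x) x)
    (hv'' : HasDerivAt v'' (v''' x) x)
    (heq1 : ∀ y, lam • v y + v' y - u' y = 0)
    (heq2 : lam • u x + u' x - (-a * p' (vhat x) - vhat' x / vhat x ^ 2) • v' x
      = (vhat x)⁻¹ • u'' x - d • v''' x) :
    HasDerivAt (slemrodEnergy a lam d p' vhat u v v' v'')
      (-slemrodDissipation a lam p'' vhat vhat' v v' x) x := by
  have hu'_eq : u' = fun y => lam • v y + v' y := funext fun y => (sub_eq_zero.1 (heq1 y)).symm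
  have hu'' : u'' x = lam • v' x + v'' x := hu'.unique (hu'_eq ▸ (hv.const_smul lam).add hv')
  have hD := (((((((hv.sub hu).norm_sq.div_const 2).add (hv.norm_sq.div_const 2)).add
    ((((hp'.comp x hder).const_mul a).mul hv.norm_sq).div_const 2)).sub
    ((hv.norm_sq.const_mul lam).div (hder.const_mul 2) (by positivity))).sub
    ((hv.inner ℝ hv').div hder hvhat.ne')).add
    (((hv.inner ℝ hv'').sub (hv'.norm_sq.div_const 2)).const_mul d))
  refine hD.congr_deriv ?_
  -- the `d ⟪v, v'''⟫` term of the derivative is eliminated by pairing `heq2` with `v`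
  have key := congrArg (⟪v x, ·⟫) heq2
  simp only [hu'', hu'_eq, inner_add_right, inner_sub_right, inner_smul_right,
    real_inner_self_eq_norm_sq] at key
  have hne := hvhat.ne'
  field_simp at key
  simp only [slemrodDissipation, hu'_eq, Pi.sub_apply, Function.comp_apply, inner_add_right,
    inner_sub_right, inner_smul_right, inner_sub_left, real_inner_self_eq_norm_sq,
    real_inner_comm (v x)]
  field_simp
  linear_combination 2 * key

theorem tendsto_slemrodEnergy {l : Filter ℝ} {V : ℝ} (hV : 0 < V) (hp' : ContinuousAt p' V)
    (hvhat : Tendsto vhat l (𝓝 V)) (hu : Tendsto u l (𝓝 0)) (hv : Tendsto v l (𝓝 0))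
    (hv' : Tendsto v' l (𝓝 0)) (hv'' : Tendsto v'' l (𝓝 0)) :
    Tendsto (slemrodEnergy a lam d p' vhat u v v' v'') l (𝓝 0) := by
  have h := ((((((((hv.sub hu).norm.pow 2).div_const 2).add ((hv.norm.pow 2).div_const 2)).add
    ((((hp'.tendsto.comp hvhat).const_mul a).mul (hv.norm.pow 2)).div_const 2)).sub
    (((hv.norm.pow 2).const_mul lam).div (hvhat.const_mul 2) (by positivity))).sub
    ((hv.inner hv').div hvhat hV.ne')).add
    (((hv.inner hv'').sub ((hv'.norm.pow 2).div_const 2)).const_mul d))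
  convert h using 2 <;> simp [slemrodEnergy]

theorem eq_zero_of_slemrod_eigen {vm vp : ℝ} (ha : 0 < a) (hlam : 0 ≤ lam)
    (hp' : ∀ s ∈ Ioi (0:ℝ), HasDerivAt p' (p'' s) s)
    (hp''pos : ∀ s ∈ Ioi (0:ℝ), 0 < p'' s)
    (hvm : 0 < vm) (hvp : 0 < vp) (hpos : ∀ x, 0 < vhat x)
    (hder : ∀ x, HasDerivAt vhat (vhat' x) x) (hmono : ∀ x, vhat' x < 0)
    (hlim_m : Tendsto vhat atBot (𝓝 vm)) (hlim_p : Tendsto vhat atTop (𝓝 vp))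
    (hu : ∀ x, HasDerivAt u (u' x) x) (hu' : ∀ x, HasDerivAt u' (u'' x) x)
    (hv : ∀ x, HasDerivAt v (v' x) x) (hv' : ∀ x, HasDerivAt v' (v'' x) x)
    (hv'' : ∀ x, HasDerivAt v'' (v''' x) x)
    (hu_lim : Tendsto u atTop (𝓝 0) ∧ Tendsto u atBot (𝓝 0))
    (hv_lim : Tendsto v atTop (𝓝 0) ∧ Tendsto v atBot (𝓝 0))
    (hv'_lim : Tendsto v' atTop (𝓝 0) ∧ Tendsto v' atBot (𝓝 0))
    (hv''_lim : Tendsto v'' atTop (𝓝 0) ∧ Tendsto v'' atBot (𝓝 0))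
    (heq1 : ∀ x, lam • v x + v' x - u' x = 0)
    (heq2 : ∀ x, lam • u x + u' x - (-a * p' (vhat x) - vhat' x / vhat x ^ 2) • v' x
      = (vhat x)⁻¹ • u'' x - d • v''' x) :
    (∀ x, u x = 0) ∧ (∀ x, v x = 0) := by
  have hcoeff x : 0 < a * p'' (vhat x) * -vhat' x :=
    mul_pos (mul_pos ha (hp''pos _ (hpos x))) (neg_pos.2 (hmono x))
  have hlower x :=
    le_slemrodDissipation (a := a) (p'' := p'') (v := v) (v' := v') hlam (hpos x) (hmono x).le
  have hdiss := eq_zero_of_hasDerivAt_neg_of_tendsto_zero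
    (fun x => hasDerivAt_slemrodEnergy (hpos x) (hp' _ (hpos x)) (hder x) (hu x) (hu' x) (hv x)
      (hv' x) (hv'' x) heq1 (heq2 x))
    (fun x => le_trans (by have := hcoeff x; positivity) (hlower x))
    (tendsto_slemrodEnergy hvp (hp' vp hvp).continuousAt hlim_p hu_lim.1 hv_lim.1 hv'_lim.1
      hv''_lim.1)
    (tendsto_slemrodEnergy hvm (hp' vm hvm).continuousAt hlim_m hu_lim.2 hv_lim.2 hv'_lim.2
      hv''_lim.2)
  have hv0 x : v x = 0 := by
    have h := (hlower x).trans_eq (hdiss x)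
    have : ‖v x‖ ^ 2 ≤ 0 := by nlinarith [hcoeff x]
    simpa using this
  have hv'0 x : v' x = 0 :=
    (hv x).unique (by simpa [funext hv0] using hasDerivAt_const x (0 : E))
  have hu'0 x : u' x = 0 := by simpa [hv0, hv'0] using heq1 x
  exact ⟨eq_zero_of_hasDerivAt_zero_of_tendsto_zero (fun x => hu'0 x ▸ hu x) hu_lim.1, hv0⟩

end Slemrod

theorem monotone_no_unstable_real_spectrum_general
    (p p' p'' : ℝ → ℝ)
    (hp'd : ∀ s ∈ Ioi (0:ℝ), HasDerivAt p (p' s) s)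
    (hp''d : ∀ s ∈ Ioi (0:ℝ), HasDerivAt p' (p'' s) s)
    (hp'neg : ∀ s ∈ Ioi (0:ℝ), p' s < 0)
    (hp''pos : ∀ s ∈ Ioi (0:ℝ), 0 < p'' s)
    (vp vm a d : ℝ)
    (hvp : 0 < vp) (hvlt : vp < vm)
    (ha : a = -(vp - vm) / (p vp - p vm))
    (vhat vhat' : ℝ → ℝ)
    (hpos : ∀ x, 0 < vhat x)
    (hder1 : ∀ x, HasDerivAt vhat (vhat' x) x)
    (hmono : ∀ x, vhat' x < 0)
    (hlim_m : Tendsto vhat atBot (𝓝 vm))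
    (hlim_p : Tendsto vhat atTop (𝓝 vp))
    (lam : ℝ) (hlam : 0 ≤ lam)
    (u u' u'' v v' v'' v''' : ℝ → ℂ)
    (hud1 : ∀ x, HasDerivAt u (u' x) x)
    (hud2 : ∀ x, HasDerivAt u' (u'' x) x)
    (hvd1 : ∀ x, HasDerivAt v (v' x) x)
    (hvd2 : ∀ x, HasDerivAt v' (v'' x) x)
    (hvd3 : ∀ x, HasDerivAt v'' (v''' x) x)
    (hdecay : ∀ g ∈ ([u, u', u'', v, v', v'', v'''] : List (ℝ → ℂ)),
      Tendsto g atTop (𝓝 0) ∧ Tendsto g atBot (𝓝 0))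
    (heq1 : ∀ x, (lam : ℂ) * v x + v' x - u' x = 0)
    (heq2 : ∀ x, (lam : ℂ) * u x + u' x
        - ((-a * p' (vhat x) - vhat' x / (vhat x) ^ 2 : ℝ) : ℂ) * v' x
      = u'' x / ((vhat x : ℝ) : ℂ) - (d : ℂ) * v''' x) :
    (∀ x, u x = 0) ∧ (∀ x, v x = 0) := by
  have hvm : 0 < vm := hvp.trans hvlt
  have hanti : StrictAntiOn p (Ioi 0) :=
    strictAntiOn_of_hasDerivWithinAt_neg (convex_Ioi 0)
      (fun s hs => (hp'd s hs).continuousAt.continuousWithinAt)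
      (fun s hs => (hp'd s (interior_subset hs)).hasDerivWithinAt)
      (fun s hs => hp'neg s (interior_subset hs))
  have ha_pos : 0 < a := ha ▸ div_pos (by linarith) (sub_pos.2 (hanti hvp hvm hvlt))
  refine eq_zero_of_slemrod_eigen (d := d) ha_pos hlam hp''d hp''pos hvm hvp hpos hder1 hmono
    hlim_m hlim_p hud1 hud2 hvd1 hvd2 hvd3 (hdecay u (by simp)) (hdecay v (by simp))
    (hdecay v' (by simp)) (hdecay v'' (by simp)) (fun x => ?_) (fun x => ?_)
  · simpa only [Complex.real_smul] using heq1 x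
  · simpa only [Complex.real_smul, Complex.ofReal_inv, div_eq_inv_mul] using heq2 x

/-- Monotone shocks of Slemrod's model have no unstable real
spectrum, regardless of amplitude: for a monotone profile (`vhat' < 0`) and a
real `λ ≥ 0`, any solution `(u, v)` of the integrated eigenvalue system with
the stated decay is identically zero. -/
theorem monotone_no_unstable_real_spectrum
    (p p' p'' : ℝ → ℝ)
    (hp'd : ∀ s ∈ Ioi (0:ℝ), HasDerivAt p (p' s) s)
    (hp''d : ∀ s ∈ Ioi (0:ℝ), HasDerivAt p' (p'' s) s)
    (hp''cont : ContinuousOn p'' (Ioi 0))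
    (hp'neg : ∀ s ∈ Ioi (0:ℝ), p' s < 0)
    (hp''pos : ∀ s ∈ Ioi (0:ℝ), 0 < p'' s)
    (vp vm a d : ℝ)
    (hvp : 0 < vp) (hvlt : vp < vm) (hd : 0 ≤ d)
    (ha : a = -(vp - vm) / (p vp - p vm))
    (vhat vhat' vhat'' : ℝ → ℝ)
    (hpos : ∀ x, 0 < vhat x)
    (hder1 : ∀ x, HasDerivAt vhat (vhat' x) x)
    (hder2 : ∀ x, HasDerivAt vhat' (vhat'' x) x)
    (hmono : ∀ x, vhat' x < 0)
    (hprof : ∀ x, vhat x - vm + a * (p (vhat x) - p vm) = vhat' x / vhat x - d * vhat'' x)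
    (hlim_m : Tendsto vhat atBot (𝓝 vm))
    (hlim_p : Tendsto vhat atTop (𝓝 vp))
    (hlimd_m : Tendsto vhat' atBot (𝓝 0))
    (hlimd_p : Tendsto vhat' atTop (𝓝 0))
    (lam : ℝ) (hlam : 0 ≤ lam)
    (u u' u'' v v' v'' v''' : ℝ → ℂ)
    (hud1 : ∀ x, HasDerivAt u (u' x) x)
    (hud2 : ∀ x, HasDerivAt u' (u'' x) x)
    (hvd1 : ∀ x, HasDerivAt v (v' x) x)
    (hvd2 : ∀ x, HasDerivAt v' (v'' x) x)
    (hvd3 : ∀ x, HasDerivAt v'' (v''' x) x)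
    (hL2 : ∀ g ∈ ([u, u', u'', v, v', v'', v'''] : List (ℝ → ℂ)),
      MemLp g 2 volume)
    (hdecay : ∀ g ∈ ([u, u', u'', v, v', v'', v'''] : List (ℝ → ℂ)),
      Tendsto g atTop (𝓝 0) ∧ Tendsto g atBot (𝓝 0))
    (heq1 : ∀ x, (lam : ℂ) * v x + v' x - u' x = 0)
    (heq2 : ∀ x, (lam : ℂ) * u x + u' x
        - ((-a * p' (vhat x) - vhat' x / (vhat x) ^ 2 : ℝ) : ℂ) * v' x
      = u'' x / ((vhat x : ℝ) : ℂ) - (d : ℂ) * v''' x) :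
    (∀ x, u x = 0) ∧ (∀ x, v x = 0) :=
  monotone_no_unstable_real_spectrum_general p p' p'' hp'd hp''d hp'neg hp''pos vp vm a d hvp hvlt
    ha vhat vhat' hpos hder1 hmono hlim_m hlim_p lam hlam u u' u'' v v' v'' v''' hud1 hud2 hvd1 hvd2
    hvd3 hdecay heq1 heq2
end

section
/- Consider the adiabatic pressure law p(v) = v^(−γ) with γ ≥ 1, normalized so that v₋ = 1, with 0 < v₊ < 1, a = (1 − v₊)/(v₊^(−γ) − 1), and d > 0. Let v̂ be a monotone shock profile (so 0 < v̂ ≤ 1, v̂′ < 0, |v̂′| ≤ 1/4, and f(v̂) := −a p′(v̂) − v̂′/v̂² > 0), and set C = sup_x |f(v̂(x)) v̂(x)|. Then for every ε₁, ε₂, θ > 0, every λ ∈ ℂ with Re λ ≥ 0, and every solution (u, v) of the integrated eigenvalue system λv + v′ − u′ = 0, λu + u′ − f(v̂)v′ = u″/v̂ − d v‴ (decay class as below), the inequality (Re λ + |Im λ|)∫_ℝ v̂|u|² + (1 − ε₁ − ε₂)∫_ℝ |u′|² ≤ [1/(4ε₁) + C/(2θ)]∫_ℝ v̂|u|² + d²[1/4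 + 1/(2ε₂)]∫_ℝ |v″|² + θ∫_ℝ f(v̂)|v′|² holds. -/
/-!
Multiply the second equation by `v̂ ū` and integrate. Integrations by parts turn `∫ u″ū` into
`-∫ |u′|²`, move one derivative off `v‴`, and give `Re ∫ v̂ u′ ū = -½ ∫ v̂′ |u|²`. Taking the real
part plus `sgn (Im λ)` times the imaginary part of the resulting identity puts
`(Re λ + |Im λ|) ∫ v̂ |u|² + ∫ |u′|² - ½ ∫ v̂′ |u|²` on the left; each remaining term is then
bounded by a weighted Young inequality, and the one carrying `v̂′ v″ ū` is absorbed by the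
nonnegative term `-½ ∫ v̂′ |u|²` thanks to `|v̂′| ≤ 1/4`.
-/

open Filter Topology Set MeasureTheory ComplexConjugate

noncomputable def weightedInner (w : ℝ → ℝ) (g h : ℝ → ℂ) : ℂ :=
  ∫ x, (w x : ℂ) * g x * conj (h x)

lemma integrable_ofReal_mul_mul_conj {w : ℝ → ℝ} {g h : ℝ → ℂ} {M : ℝ}
    (hw : AEStronglyMeasurable w) (hwM : ∀ x, |w x| ≤ M) (hg : MemLp g 2) (hh : MemLp h 2) :
    Integrable (fun x => (w x : ℂ) * g x * conj (h x)) := by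
  simp_rw [mul_assoc]
  refine Integrable.bdd_mul (c := M) (hg.integrable_mul hh.star) (by fun_prop)
    (ae_of_all _ fun x => ?_)
  simpa using hwM x

lemma integrable_mul_sq_norm {w : ℝ → ℝ} {g : ℝ → ℂ} {M : ℝ} (hw : AEStronglyMeasurable w)
    (hwM : ∀ x, |w x| ≤ M) (hg : MemLp g 2) : Integrable (fun x => w x * ‖g x‖ ^ 2) :=
  ((memLp_two_iff_integrable_sq_norm hg.1).1 hg).bdd_mul hw
    (ae_of_all _ fun x => by simpa using hwM x)

lemma tendsto_ofReal_mul_mul_conj_zero {l : Filter ℝ} {w : ℝ → ℝ} {g h : ℝ → ℂ} {M : ℝ}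
    (hwM : ∀ x, |w x| ≤ M) (hg : Tendsto g l (𝓝 0)) (hh : Tendsto h l (𝓝 0)) :
    Tendsto (fun x => (w x : ℂ) * g x * conj (h x)) l (𝓝 0) := by
  have hgh : Tendsto (fun x => g x * conj (h x)) l (𝓝 0) := by
    simpa using hg.mul (Complex.continuous_conj.tendsto' 0 0 (by simp) |>.comp hh)
  simp_rw [mul_assoc]
  refine isBoundedUnder_le_mul_tendsto_zero ⟨M, eventually_map.2 (Eventually.of_forall
    fun x => ?_)⟩ hgh
  simpa using hwM x

lemma weightedInner_deriv_left {w w' : ℝ → ℝ} {g g' h h' : ℝ → ℂ} {M M' : ℝ}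
    (hw : ∀ x, HasDerivAt w (w' x) x) (hw'm : AEStronglyMeasurable w')
    (hwM : ∀ x, |w x| ≤ M) (hw'M : ∀ x, |w' x| ≤ M')
    (hg : ∀ x, HasDerivAt g (g' x) x) (hh : ∀ x, HasDerivAt h (h' x) x)
    (hg2 : MemLp g 2) (hg'2 : MemLp g' 2) (hh2 : MemLp h 2) (hh'2 : MemLp h' 2)
    (hg_top : Tendsto g atTop (𝓝 0)) (hg_bot : Tendsto g atBot (𝓝 0))
    (hh_top : Tendsto h atTop (𝓝 0)) (hh_bot : Tendsto h atBot (𝓝 0)) :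
    weightedInner w g' h = -(weightedInner w' g h + weightedInner w g h') := by
  have hwm : AEStronglyMeasurable w :=
    (continuous_iff_continuousAt.2 fun x => (hw x).continuousAt).aestronglyMeasurable
  have hG : ∀ x, HasDerivAt (fun y => (w y : ℂ) * conj (h y))
      ((w' x : ℂ) * conj (h x) + (w x : ℂ) * conj (h' x)) x :=
    fun x => (hw x).ofReal_comp.mul (hh x).star
  have hI₁ := integrable_ofReal_mul_mul_conj hw'm hw'M hg2 hh2
  have hI₂ := integrable_ofReal_mul_mul_conj hwm hwM hg2 hh'2
  have hparts := integral_mul_deriv_eq_deriv_mul (fun x _ => hg x) (fun x _ => hG x)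
    ((hI₁.add hI₂).congr (ae_of_all _ fun x => by simp only [Pi.mul_apply, Pi.add_apply]; ring))
    ((integrable_ofReal_mul_mul_conj hwm hwM hg'2 hh2).congr
      (ae_of_all _ fun x => by simp only [Pi.mul_apply]; ring))
    ((tendsto_ofReal_mul_mul_conj_zero hwM hg_bot hh_bot).congr fun x => by
      simp only [Pi.mul_apply]; ring)
    ((tendsto_ofReal_mul_mul_conj_zero hwM hg_top hh_top).congr fun x => by
      simp only [Pi.mul_apply]; ring)
  calc weightedInner w g' h = ∫ x, g' x * ((w x : ℂ) * conj (h x)) := by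
        rw [weightedInner]; congr 1; ext x; ring
    _ = -∫ x, g x * ((w' x : ℂ) * conj (h x) + (w x : ℂ) * conj (h' x)) := by
        rw [hparts, sub_self, zero_sub, neg_neg]
    _ = -(weightedInner w' g h + weightedInner w g h') := by
        rw [weightedInner, weightedInner, ← integral_add hI₁ hI₂]; congr 2; ext x; ring

lemma weightedInner_self (w : ℝ → ℝ) (g : ℝ → ℂ) :
    weightedInner w g g = ((∫ x, w x * ‖g x‖ ^ 2 : ℝ) : ℂ) := by
  rw [weightedInner, ← integral_complex_ofReal]
  congr 1; ext x
  rw [mul_assoc, RCLike.mul_conj]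
  push_cast; rfl

lemma conj_weightedInner (w : ℝ → ℝ) (g h : ℝ → ℂ) :
    conj (weightedInner w g h) = weightedInner w h g := by
  rw [weightedInner, weightedInner, ← integral_conj]
  congr 1; ext x
  simp only [map_mul, Complex.conj_ofReal, Complex.conj_conj]
  ring

lemma re_weightedInner_deriv_self {w w' : ℝ → ℝ} {g g' : ℝ → ℂ} {M M' : ℝ}
    (hw : ∀ x, HasDerivAt w (w' x) x) (hw'm : AEStronglyMeasurable w')
    (hwM : ∀ x, |w x| ≤ M) (hw'M : ∀ x, |w' x| ≤ M')
    (hg : ∀ x, HasDerivAt g (g' x) x) (hg2 : MemLp g 2) (hg'2 : MemLp g' 2)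
    (hg_top : Tendsto g atTop (𝓝 0)) (hg_bot : Tendsto g atBot (𝓝 0)) :
    (weightedInner w g' g).re = -(1 / 2) * ∫ x, w' x * ‖g x‖ ^ 2 := by
  have h := weightedInner_deriv_left hw hw'm hwM hw'M hg hg hg2 hg'2 hg2 hg'2
    hg_top hg_bot hg_top hg_bot
  rw [← conj_weightedInner w g' g, weightedInner_self, Complex.ext_iff] at h
  simp only [Complex.neg_re, Complex.add_re, Complex.ofReal_re, Complex.conj_re] at h
  linarith [h.1]

lemma mul_norm_weightedInner_le {w : ℝ → ℝ} {g h : ℝ → ℂ} {X Y : ℝ → ℝ} {a b c : ℝ}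
    (hc : 0 ≤ c) (hX : Integrable X) (hY : Integrable Y)
    (hle : ∀ x, c * (|w x| * ‖g x‖ * ‖h x‖) ≤ a * X x + b * Y x) :
    c * ‖weightedInner w g h‖ ≤ a * (∫ x, X x) + b * ∫ x, Y x := by
  have hXY := (hX.const_mul a).add (hY.const_mul b)
  have hc' : c * ‖weightedInner w g h‖ = ‖∫ x, (c : ℂ) * ((w x : ℂ) * g x * conj (h x))‖ := by
    rw [integral_const_mul, norm_mul, Complex.norm_real, Real.norm_of_nonneg hc, weightedInner]
  rw [hc', ← integral_const_mul, ← integral_const_mul,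
    ← integral_add (hX.const_mul a) (hY.const_mul b)]
  refine norm_integral_le_of_norm_le hXY (ae_of_all _ fun x => ?_)
  simpa [abs_of_nonneg hc, mul_assoc] using hle x

lemma re_add_mul_im_le_sqrt_two_mul_norm (z : ℂ) {σ : ℝ} (hσ : |σ| ≤ 1) :
    z.re + σ * z.im ≤ √2 * ‖z‖ := by
  refine le_of_sq_le_sq ?_ (by positivity)
  rw [mul_pow, Real.sq_sqrt zero_le_two, Complex.sq_norm, Complex.normSq_apply]
  have hσ2 : σ ^ 2 ≤ 1 := by nlinarith [sq_abs σ, abs_nonneg σ]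
  nlinarith [sq_nonneg (σ * z.re - z.im), sq_nonneg z.im]

lemma re_add_abs_im_mul_add_re_le {l P Q R₁ R₂ : ℂ} {A U d : ℝ}
    (h : l * A + P = -U + (Q + d * (R₁ + R₂))) :
    (l.re + |l.im|) * A + U + P.re ≤ ‖P‖ + √2 * ‖Q‖ + √2 * |d| * (‖R₁‖ + ‖R₂‖) := by
  obtain ⟨σ, hσ, hσl⟩ : ∃ σ : ℝ, |σ| ≤ 1 ∧ σ * l.im = |l.im| := by
    rcases le_total 0 l.im with hl | hl
    · exact ⟨1, by norm_num, by rw [abs_of_nonneg hl, one_mul]⟩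
    · exact ⟨-1, by norm_num, by rw [abs_of_nonpos hl, neg_one_mul]⟩
  set S := Q + d * (R₁ + R₂)
  have hre := congrArg Complex.re h
  have him := congrArg Complex.im h
  simp only [Complex.add_re, Complex.add_im, Complex.mul_re, Complex.mul_im, Complex.neg_re,
    Complex.neg_im, Complex.ofReal_re, Complex.ofReal_im, mul_zero, sub_zero,
    neg_zero, zero_add] at hre him
  have hP : -(σ * P.im) ≤ ‖P‖ :=
    calc -(σ * P.im) ≤ |σ| * |P.im| := (neg_le_abs _).trans (abs_mul _ _).le
      _ ≤ ‖P‖ := (mul_le_of_le_one_left (abs_nonneg _) hσ).trans (Complex.abs_im_le_norm P)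
  have hS : ‖S‖ ≤ ‖Q‖ + |d| * (‖R₁‖ + ‖R₂‖) :=
    calc ‖S‖ ≤ ‖Q‖ + ‖(d : ℂ)‖ * ‖R₁ + R₂‖ := (norm_add_le _ _).trans_eq (by rw [norm_mul])
      _ ≤ ‖Q‖ + |d| * (‖R₁‖ + ‖R₂‖) := by
        rw [Complex.norm_real, Real.norm_eq_abs]; gcongr; exact norm_add_le _ _
  have hreS := re_add_mul_im_le_sqrt_two_mul_norm S hσ
  have hS₂ := mul_le_mul_of_nonneg_left hS (Real.sqrt_nonneg 2)
  linear_combination hre + σ * him - A * hσl + hP + hreS + hS₂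

lemma weightedInner_eq_of_eigen {w f : ℝ → ℝ} {u u' u'' v' v''' : ℝ → ℂ} {lam : ℂ} {d M K : ℝ}
    (hwm : AEStronglyMeasurable w) (hfm : AEStronglyMeasurable f) (hw0 : ∀ x, 0 < w x)
    (hwM : ∀ x, |w x| ≤ M) (hfwK : ∀ x, |f x * w x| ≤ K)
    (hu2 : MemLp u 2) (hu'2 : MemLp u' 2) (hu''2 : MemLp u'' 2) (hv'2 : MemLp v' 2)
    (hv'''2 : MemLp v''' 2)
    (heq : ∀ x, lam * u x + u' x - (f x : ℂ) * v' x = u'' x / (w x : ℂ) - d * v''' x) :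
    lam * weightedInner w u u + weightedInner w u' u
      = weightedInner (fun _ => 1) u'' u
        + (weightedInner (fun x => f x * w x) v' u - d * weightedInner w v''' u) := by
  have hpt : ∀ x, lam * ((w x : ℂ) * u x * conj (u x)) + (w x : ℂ) * u' x * conj (u x)
      = ((1 : ℝ) : ℂ) * u'' x * conj (u x) + (((f x * w x : ℝ) : ℂ) * v' x * conj (u x)
        - d * ((w x : ℂ) * v''' x * conj (u x))) := by
    intro x
    have hwx : (w x : ℂ) ≠ 0 := Complex.ofReal_ne_zero.2 (hw0 x).ne'
    have := congrArg (fun z => z * ((w x : ℂ) * conj (u x))) (heq x)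
    field_simp at this ⊢
    push_cast
    linear_combination this
  have iuu := integrable_ofReal_mul_mul_conj hwm hwM hu2 hu2
  have iu'u := integrable_ofReal_mul_mul_conj hwm hwM hu'2 hu2
  have iu''u := integrable_ofReal_mul_mul_conj (w := fun _ => 1) (M := 1)
    aestronglyMeasurable_const (fun _ => by simp) hu''2 hu2
  have iv'u := integrable_ofReal_mul_mul_conj (w := fun x => f x * w x) (hfm.mul hwm) hfwK
    hv'2 hu2
  have iv'''u := (integrable_ofReal_mul_mul_conj hwm hwM hv'''2 hu2).const_mul (d : ℂ)
  have iv'u_sub : Integrable (fun x => ((f x * w x : ℝ) : ℂ) * v' x * conj (u x)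
      - d * ((w x : ℂ) * v''' x * conj (u x))) := iv'u.sub iv'''u
  have h := integral_congr_ae (μ := volume) (ae_of_all _ hpt)
  rw [integral_add (iuu.const_mul lam) iu'u, integral_const_mul, integral_add iu''u iv'u_sub,
    integral_sub iv'u iv'''u, integral_const_mul] at h
  exact h

lemma energy_identity {w w' f : ℝ → ℝ} {u u' u'' v' v'' v''' : ℝ → ℂ} {lam : ℂ}
    {d M M' K : ℝ}
    (hw : ∀ x, HasDerivAt w (w' x) x) (hw'm : AEStronglyMeasurable w')
    (hfm : AEStronglyMeasurable f) (hw0 : ∀ x, 0 < w x) (hwM : ∀ x, |w x| ≤ M)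
    (hw'M : ∀ x, |w' x| ≤ M') (hfwK : ∀ x, |f x * w x| ≤ K)
    (hu : ∀ x, HasDerivAt u (u' x) x) (hu' : ∀ x, HasDerivAt u' (u'' x) x)
    (hv'' : ∀ x, HasDerivAt v'' (v''' x) x)
    (hu2 : MemLp u 2) (hu'2 : MemLp u' 2) (hu''2 : MemLp u'' 2) (hv'2 : MemLp v' 2)
    (hv''2 : MemLp v'' 2) (hv'''2 : MemLp v''' 2)
    (hu_top : Tendsto u atTop (𝓝 0)) (hu_bot : Tendsto u atBot (𝓝 0))
    (hu'_top : Tendsto u' atTop (𝓝 0)) (hu'_bot : Tendsto u' atBot (𝓝 0))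
    (hv''_top : Tendsto v'' atTop (𝓝 0)) (hv''_bot : Tendsto v'' atBot (𝓝 0))
    (heq : ∀ x, lam * u x + u' x - (f x : ℂ) * v' x = u'' x / (w x : ℂ) - d * v''' x) :
    lam * ((∫ x, w x * ‖u x‖ ^ 2 : ℝ) : ℂ) + weightedInner w u' u
      = -((∫ x, ‖u' x‖ ^ 2 : ℝ) : ℂ) + (weightedInner (fun x => f x * w x) v' u
          + d * (weightedInner w' v'' u + weightedInner w v'' u')) := by
  have hwm : AEStronglyMeasurable w :=
    (continuous_iff_continuousAt.2 fun x => (hw x).continuousAt).aestronglyMeasurable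
  have hu''u : weightedInner (fun _ => 1) u'' u = -((∫ x, ‖u' x‖ ^ 2 : ℝ) : ℂ) := by
    rw [weightedInner_deriv_left (fun _ => hasDerivAt_const _ _) aestronglyMeasurable_const
      (M := 1) (M' := 0) (fun _ => by simp) (fun _ => by simp) hu' hu hu'2 hu''2 hu2 hu'2
      hu'_top hu'_bot hu_top hu_bot, weightedInner_self]
    simp [weightedInner]
  have hv'''u := weightedInner_deriv_left hw hw'm hwM hw'M hv'' hu hv''2 hv'''2 hu2 hu'2
    hv''_top hv''_bot hu_top hu_bot
  rw [← weightedInner_self, weightedInner_eq_of_eigen hwm hfm hw0 hwM hfwK hu2 hu'2 hu''2 hv'2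
    hv'''2 heq, hu''u, hv'''u]
  ring

lemma abs_mul_mul_le_of_le_one {w p q ε : ℝ} (hε : 0 < ε) (hw0 : 0 ≤ w) (hw1 : w ≤ 1) :
    |w| * p * q ≤ ε * p ^ 2 + 1 / (4 * ε) * (w * q ^ 2) := by
  rw [abs_of_nonneg hw0, ← sub_nonneg]
  have key : ε * p ^ 2 + 1 / (4 * ε) * (w * q ^ 2) - w * p * q
      = ((2 * ε * p - w * q) ^ 2 + w * (1 - w) * q ^ 2) / (4 * ε) := by
    field_simp; ring
  rw [key]
  have : 0 ≤ w * (1 - w) := mul_nonneg hw0 (sub_nonneg.2 hw1)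
  positivity

lemma sqrt_two_mul_abs_mul_mul_le {f w p q θ C : ℝ} (hθ : 0 < θ) (hf : 0 ≤ f) (hw : 0 ≤ w)
    (hfwC : f * w ≤ C) :
    √2 * (|f * w| * p * q) ≤ θ * (f * p ^ 2) + C / (2 * θ) * (w * q ^ 2) := by
  rw [abs_of_nonneg (mul_nonneg hf hw), ← sub_nonneg]
  have key : θ * (f * p ^ 2) + C / (2 * θ) * (w * q ^ 2) - √2 * (f * w * p * q)
      = (f * (√2 * θ * p - w * q) ^ 2 + (C - f * w) * w * q ^ 2) / (2 * θ) := by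
    field_simp
    linear_combination (-(f * θ ^ 2 * p ^ 2)) * Real.sq_sqrt zero_le_two
  rw [key]
  have : 0 ≤ (C - f * w) * w := mul_nonneg (sub_nonneg.2 hfwC) hw
  positivity

lemma sqrt_two_mul_abs_mul_abs_mul_mul_le {d w' p q : ℝ} (hw'0 : w' ≤ 0) (hw'1 : |w'| ≤ 1 / 4) :
    √2 * |d| * (|w'| * p * q) ≤ -(1 / 2) * (w' * q ^ 2) + d ^ 2 / 4 * p ^ 2 := by
  rw [abs_of_nonpos hw'0] at hw'1 ⊢
  rw [← sub_nonneg]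
  have key : -(1 / 2) * (w' * q ^ 2) + d ^ 2 / 4 * p ^ 2 - √2 * |d| * (-w' * p * q)
      = -w' / 2 * (q - √2 * |d| * p) ^ 2 + (1 / 4 + w') * d ^ 2 * p ^ 2 := by
    linear_combination (w' * |d| ^ 2 * p ^ 2 / 2) * Real.sq_sqrt zero_le_two
      + w' * p ^ 2 * sq_abs d
  rw [key]
  have : 0 ≤ 1 / 4 + w' := by linarith
  have : 0 ≤ -w' := by linarith
  positivity

lemma sqrt_two_mul_abs_mul_abs_mul_mul_le_of_le_one {d w p q ε : ℝ} (hε : 0 < ε) (hw0 : 0 ≤ w)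
    (hw1 : w ≤ 1) :
    √2 * |d| * (|w| * p * q) ≤ ε * q ^ 2 + d ^ 2 / (2 * ε) * p ^ 2 := by
  rw [abs_of_nonneg hw0, ← sub_nonneg]
  have key : ε * q ^ 2 + d ^ 2 / (2 * ε) * p ^ 2 - √2 * |d| * (w * p * q)
      = ((2 * ε * q - √2 * |d| * w * p) ^ 2 + 2 * (1 - w ^ 2) * d ^ 2 * p ^ 2) / (4 * ε) := by
    field_simp
    linear_combination (-2 * |d| ^ 2 * p ^ 2 * w ^ 2) * Real.sq_sqrt zero_le_two
      - 4 * p ^ 2 * w ^ 2 * sq_abs d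
  rw [key]
  have : 0 ≤ 1 - w ^ 2 := by nlinarith
  positivity

theorem high_frequency_estimate_of_weight {w w' f : ℝ → ℝ} {u u' u'' v' v'' v''' : ℝ → ℂ}
    {lam : ℂ} {d C K ε₁ ε₂ θ : ℝ}
    (hw : ∀ x, HasDerivAt w (w' x) x) (hw'm : AEStronglyMeasurable w')
    (hfm : AEStronglyMeasurable f) (hw0 : ∀ x, 0 < w x) (hw1 : ∀ x, w x ≤ 1)
    (hw'0 : ∀ x, w' x ≤ 0) (hw'1 : ∀ x, |w' x| ≤ 1 / 4)
    (hf0 : ∀ x, 0 ≤ f x) (hfK : ∀ x, |f x| ≤ K) (hfwC : ∀ x, |f x * w x| ≤ C)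
    (hu : ∀ x, HasDerivAt u (u' x) x) (hu' : ∀ x, HasDerivAt u' (u'' x) x)
    (hv'' : ∀ x, HasDerivAt v'' (v''' x) x)
    (hu2 : MemLp u 2) (hu'2 : MemLp u' 2) (hu''2 : MemLp u'' 2) (hv'2 : MemLp v' 2)
    (hv''2 : MemLp v'' 2) (hv'''2 : MemLp v''' 2)
    (hu_top : Tendsto u atTop (𝓝 0)) (hu_bot : Tendsto u atBot (𝓝 0))
    (hu'_top : Tendsto u' atTop (𝓝 0)) (hu'_bot : Tendsto u' atBot (𝓝 0))
    (hv''_top : Tendsto v'' atTop (𝓝 0)) (hv''_bot : Tendsto v'' atBot (𝓝 0))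
    (heq : ∀ x, lam * u x + u' x - (f x : ℂ) * v' x = u'' x / (w x : ℂ) - d * v''' x)
    (hε₁ : 0 < ε₁) (hε₂ : 0 < ε₂) (hθ : 0 < θ) :
    (lam.re + |lam.im|) * (∫ x, w x * ‖u x‖ ^ 2) + (1 - ε₁ - ε₂) * (∫ x, ‖u' x‖ ^ 2)
      ≤ (1 / (4 * ε₁) + C / (2 * θ)) * (∫ x, w x * ‖u x‖ ^ 2)
        + d ^ 2 * (1 / 4 + 1 / (2 * ε₂)) * (∫ x, ‖v'' x‖ ^ 2)
        + θ * (∫ x, f x * ‖v' x‖ ^ 2) := by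
  have hwm : AEStronglyMeasurable w :=
    (continuous_iff_continuousAt.2 fun x => (hw x).continuousAt).aestronglyMeasurable
  have hw_abs : ∀ x, |w x| ≤ 1 := fun x => (abs_of_pos (hw0 x)).trans_le (hw1 x)
  have hid := energy_identity hw hw'm hfm hw0 hw_abs hw'1 hfwC hu hu' hv'' hu2 hu'2 hu''2 hv'2
    hv''2 hv'''2 hu_top hu_bot hu'_top hu'_bot hv''_top hv''_bot heq
  have hPre := re_weightedInner_deriv_self hw hw'm hw_abs hw'1 hu hu2 hu'2 hu_top hu_bot
  have iu' := (memLp_two_iff_integrable_sq_norm hu'2.1).1 hu'2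
  have iv'' := (memLp_two_iff_integrable_sq_norm hv''2.1).1 hv''2
  have iwu := integrable_mul_sq_norm hwm hw_abs hu2
  have iw'u := integrable_mul_sq_norm hw'm hw'1 hu2
  have ifv' := integrable_mul_sq_norm hfm hfK hv'2
  have bP := mul_norm_weightedInner_le zero_le_one iu' iwu
    fun x => (one_mul _).trans_le (abs_mul_mul_le_of_le_one hε₁ (hw0 x).le (hw1 x))
  have bQ := mul_norm_weightedInner_le (w := fun x => f x * w x) (g := v') (h := u)
    (Real.sqrt_nonneg 2) ifv' iwu fun x => sqrt_two_mul_abs_mul_mul_le hθ (hf0 x) (hw0 x).le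
      ((le_abs_self _).trans (hfwC x))
  have bR₁ := mul_norm_weightedInner_le (w := w') (g := v'') (h := u) (by positivity) iw'u iv''
    fun x => sqrt_two_mul_abs_mul_abs_mul_mul_le (d := d) (hw'0 x) (hw'1 x)
  have bR₂ := mul_norm_weightedInner_le (w := w) (g := v'') (h := u') (by positivity) iu' iv''
    fun x => sqrt_two_mul_abs_mul_abs_mul_mul_le_of_le_one (d := d) hε₂ (hw0 x).le (hw1 x)
  linear_combination re_add_abs_im_mul_add_re_le hid - hPre + bP + bQ + bR₁ + bR₂

theorem high_frequency_estimate_one_general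
    (γ : ℝ)
    (vp a d : ℝ) (hvp : 0 < vp)
    (vhat vhat' : ℝ → ℝ)
    (hpos : ∀ x, 0 < vhat x) (hle1 : ∀ x, vhat x ≤ 1)
    (hder1 : ∀ x, HasDerivAt vhat (vhat' x) x)
    (hlim_p : Tendsto vhat atTop (𝓝 vp))
    (hmono : ∀ x, vhat' x < 0)
    (hbd : ∀ x, |vhat' x| ≤ 1 / 4)
    (f : ℝ → ℝ)
    (hf : ∀ x, f x = a * γ * (vhat x) ^ (-γ - 1) - vhat' x / (vhat x) ^ 2)
    (hfpos : ∀ x, 0 < f x)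
    (C : ℝ) (hC : IsLUB (Set.range fun x => |f x * vhat x|) C)
    (lam : ℂ)
    (u u' u'' v v' v'' v''' : ℝ → ℂ)
    (hud1 : ∀ x, HasDerivAt u (u' x) x)
    (hud2 : ∀ x, HasDerivAt u' (u'' x) x)
    (hvd3 : ∀ x, HasDerivAt v'' (v''' x) x)
    (hL2 : ∀ g ∈ ([u, u', u'', v, v', v'', v'''] : List (ℝ → ℂ)),
      MemLp g 2 volume)
    (hdecay : ∀ g ∈ ([u, u', u'', v, v', v'', v'''] : List (ℝ → ℂ)),
      Tendsto g atTop (𝓝 0) ∧ Tendsto g atBot (𝓝 0))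
    (heq2 : ∀ x, lam * u x + u' x - ((f x : ℝ) : ℂ) * v' x
      = u'' x / ((vhat x : ℝ) : ℂ) - (d : ℂ) * v''' x) :
    ∀ ε₁ ε₂ θ : ℝ, 0 < ε₁ → 0 < ε₂ → 0 < θ →
      (lam.re + |lam.im|) * (∫ x, vhat x * ‖u x‖ ^ 2)
          + (1 - ε₁ - ε₂) * (∫ x, ‖u' x‖ ^ 2)
        ≤ (1 / (4 * ε₁) + C / (2 * θ)) * (∫ x, vhat x * ‖u x‖ ^ 2)
          + d ^ 2 * (1 / 4 + 1 / (2 * ε₂)) * (∫ x, ‖v'' x‖ ^ 2)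
          + θ * (∫ x, f x * ‖v' x‖ ^ 2) := by
  intro ε₁ ε₂ θ hε₁ hε₂ hθ
  simp only [List.mem_cons, List.not_mem_nil, or_false, forall_eq_or_imp, forall_eq] at hL2 hdecay
  obtain ⟨hu, hu', hu'', -, hv', hv'', hv'''⟩ := hL2
  obtain ⟨⟨hu_top, hu_bot⟩, ⟨hu'_top, hu'_bot⟩, -, -, -, ⟨hv''_top, hv''_bot⟩, -⟩ := hdecay
  have hvhat_m : Measurable vhat :=
    (continuous_iff_continuousAt.2 fun x => (hder1 x).continuousAt).measurable
  have hvhat'_m : Measurable vhat' := funext (fun x => (hder1 x).deriv) ▸ measurable_deriv vhat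
  have hf_m : Measurable f := by
    rw [funext hf]; fun_prop
  have hfv_le : ∀ x, |f x * vhat x| ≤ C := fun x => hC.1 ⟨x, rfl⟩
  have hvp_le : ∀ x, vp ≤ vhat x :=
    (antitone_of_deriv_nonpos (fun x => (hder1 x).differentiableAt)
      fun x => (hder1 x).deriv ▸ (hmono x).le).le_of_tendsto hlim_p
  have hf_le : ∀ x, |f x| ≤ C / vp := fun x => by
    rw [le_div_iff₀ hvp]
    calc |f x| * vp ≤ |f x| * vhat x := mul_le_mul_of_nonneg_left (hvp_le x) (abs_nonneg _)
      _ = |f x * vhat x| := by rw [abs_mul, abs_of_pos (hpos x)]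
      _ ≤ C := hfv_le x
  exact high_frequency_estimate_of_weight hder1 hvhat'_m.aestronglyMeasurable
    hf_m.aestronglyMeasurable hpos hle1 (fun x => (hmono x).le) hbd (fun x => (hfpos x).le) hf_le
    hfv_le hud1 hud2 hvd3 hu hu' hu'' hv' hv'' hv''' hu_top hu_bot hu'_top hu'_bot hv''_top
    hv''_bot heq2 hε₁ hε₂ hθ

/-- First high-frequency estimate for the adiabatic law
`p(v) = v^(−γ)` normalized so `v₋ = 1`: for a monotone shock profile,
`Re λ ≥ 0`, and any solution of the integrated eigenvalue system,
`(Re λ + |Im λ|) ∫ vhat |u|² + (1 − ε₁ − ε₂) ∫ |u'|²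
  ≤ [1/(4ε₁) + C/(2θ)] ∫ vhat |u|² + d² [1/4 + 1/(2ε₂)] ∫ |v''|² + θ ∫ f(vhat)|v'|²`
for all `ε₁, ε₂, θ > 0`, where `C = sup |f(vhat) vhat|`. -/
theorem high_frequency_estimate_one
    (γ : ℝ) (hγ : 1 ≤ γ)
    (vp a d : ℝ) (hvp : 0 < vp) (hvp1 : vp < 1) (hd : 0 < d)
    (ha : a = (1 - vp) / (vp ^ (-γ) - 1))
    (vhat vhat' vhat'' : ℝ → ℝ)
    (hpos : ∀ x, 0 < vhat x) (hle1 : ∀ x, vhat x ≤ 1)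
    (hder1 : ∀ x, HasDerivAt vhat (vhat' x) x)
    (hder2 : ∀ x, HasDerivAt vhat' (vhat'' x) x)
    (hprof : ∀ x, vhat x - 1 + a * ((vhat x) ^ (-γ) - 1) = vhat' x / vhat x - d * vhat'' x)
    (hlim_m : Tendsto vhat atBot (𝓝 1))
    (hlim_p : Tendsto vhat atTop (𝓝 vp))
    (hlimd_m : Tendsto vhat' atBot (𝓝 0))
    (hlimd_p : Tendsto vhat' atTop (𝓝 0))
    (hmono : ∀ x, vhat' x < 0)
    (hbd : ∀ x, |vhat' x| ≤ 1 / 4)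
    (f : ℝ → ℝ)
    (hf : ∀ x, f x = a * γ * (vhat x) ^ (-γ - 1) - vhat' x / (vhat x) ^ 2)
    (hfpos : ∀ x, 0 < f x)
    (C : ℝ) (hC : IsLUB (Set.range fun x => |f x * vhat x|) C)
    (lam : ℂ) (hlam : 0 ≤ lam.re)
    (u u' u'' v v' v'' v''' : ℝ → ℂ)
    (hud1 : ∀ x, HasDerivAt u (u' x) x)
    (hud2 : ∀ x, HasDerivAt u' (u'' x) x)
    (hvd1 : ∀ x, HasDerivAt v (v' x) x)
    (hvd2 : ∀ x, HasDerivAt v' (v'' x) x)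
    (hvd3 : ∀ x, HasDerivAt v'' (v''' x) x)
    (hL2 : ∀ g ∈ ([u, u', u'', v, v', v'', v'''] : List (ℝ → ℂ)),
      MemLp g 2 volume)
    (hdecay : ∀ g ∈ ([u, u', u'', v, v', v'', v'''] : List (ℝ → ℂ)),
      Tendsto g atTop (𝓝 0) ∧ Tendsto g atBot (𝓝 0))
    (heq1 : ∀ x, lam * v x + v' x - u' x = 0)
    (heq2 : ∀ x, lam * u x + u' x - ((f x : ℝ) : ℂ) * v' x
      = u'' x / ((vhat x : ℝ) : ℂ) - (d : ℂ) * v''' x) :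
    ∀ ε₁ ε₂ θ : ℝ, 0 < ε₁ → 0 < ε₂ → 0 < θ →
      (lam.re + |lam.im|) * (∫ x, vhat x * ‖u x‖ ^ 2)
          + (1 - ε₁ - ε₂) * (∫ x, ‖u' x‖ ^ 2)
        ≤ (1 / (4 * ε₁) + C / (2 * θ)) * (∫ x, vhat x * ‖u x‖ ^ 2)
          + d ^ 2 * (1 / 4 + 1 / (2 * ε₂)) * (∫ x, ‖v'' x‖ ^ 2)
          + θ * (∫ x, f x * ‖v' x‖ ^ 2) :=
  high_frequency_estimate_one_general γ vp a d hvp vhat vhat' hpos hle1 hder1 hlim_p hmono hbd f hf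
    hfpos C hC lam u u' u'' v v' v'' v''' hud1 hud2 hvd3 hL2 hdecay heq2
end

section
/- Let v̂ be a shock profile, λ ∈ ℂ, and let (u, v) be a solution of the integrated eigenvalue system λv + v′ − u′ = 0, λu + u′ − f(v̂)v′ = u″/v̂ − d v‴ (with f(v̂) = −a p′(v̂) − v̂′/v̂², u of class C², v of class C³, and u, u′, u″, v, v′, v″, v‴ square-integrable and tending to 0 at ±∞). Then Re[ λ ∫_ℝ u v̄′ dx + ∫_ℝ u′ v̄′ dx ] = ∫_ℝ |u′|² dx − 2 (Re λ)² ∫_ℝ |v|² dx. -/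
/-!
Write `W = ∫ v′ v̄` and `‖·‖` for the `L²` norm. Substituting `u′ = λ v + v′` gives
`∫ u′ v̄ = λ ‖v‖² + W`; integration by parts turns `∫ u v̄′` into `-(λ ‖v‖² + W)`, and
`∫ u′ v̄′ = ‖u′‖² - λ̄ (λ ‖v‖² + W)`. The left-hand side is therefore
`‖u′‖² - 2 Re λ (Re λ ‖v‖² + Re W)`, and `Re W = 0` since `2 Re W = ∫ (|v|²)′ = 0`.
-/

open Filter Topology Set MeasureTheory ComplexConjugate

lemma MeasureTheory.MemLp.integrable_mul_conj {α : Type*} [MeasurableSpace α] {μ : Measure α}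
    {f g : α → ℂ} (hf : MemLp f 2 μ) (hg : MemLp g 2 μ) :
    Integrable (fun x => f x * conj (g x)) μ :=
  hf.integrable_mul hg.star

lemma integral_mul_conj_self_eq_ofReal {α : Type*} [MeasurableSpace α] {μ : Measure α}
    (f : α → ℂ) : ∫ x, f x * conj (f x) ∂μ = ((∫ x, ‖f x‖ ^ 2 ∂μ : ℝ) : ℂ) := by
  simp_rw [Complex.mul_conj', ← Complex.ofReal_pow]
  exact integral_ofReal

section IntegrationByParts

variable {u u' v v' : ℝ → ℂ}

theorem integral_mul_conj_deriv_eq_neg (hu : ∀ x, HasDerivAt u (u' x) x)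
    (hv : ∀ x, HasDerivAt v (v' x) x) (hu2 : MemLp u 2 volume) (hu'2 : MemLp u' 2 volume)
    (hv2 : MemLp v 2 volume) (hv'2 : MemLp v' 2 volume) :
    ∫ x, u x * conj (v' x) = -∫ x, u' x * conj (v x) :=
  integral_mul_deriv_eq_deriv_mul_of_integrable (fun x _ => hu x) (fun x _ => (hv x).star)
    (hu2.integrable_mul_conj hv'2) (hu'2.integrable_mul_conj hv2) (hu2.integrable_mul_conj hv2)

theorem re_integral_deriv_mul_conj_self_eq_zero (hv : ∀ x, HasDerivAt v (v' x) x)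
    (hv2 : MemLp v 2 volume) (hv'2 : MemLp v' 2 volume) :
    (∫ x, v' x * conj (v x)).re = 0 := by
  have h : conj (∫ x, v' x * conj (v x)) = -∫ x, v' x * conj (v x) := by
    rw [← integral_conj, ← integral_mul_conj_deriv_eq_neg hv hv hv2 hv'2 hv2 hv'2]
    simp_rw [map_mul, Complex.conj_conj, mul_comm]
  have h_re := congrArg Complex.re h
  rw [Complex.conj_re, Complex.neg_re] at h_re
  linarith

end IntegrationByParts

theorem kawashima_key_identity_general
    (lam : ℂ)
    (u u' u'' v v' v'' v''' : ℝ → ℂ)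
    (hud1 : ∀ x, HasDerivAt u (u' x) x)
    (hvd1 : ∀ x, HasDerivAt v (v' x) x)
    (hL2 : ∀ g ∈ ([u, u', u'', v, v', v'', v'''] : List (ℝ → ℂ)),
      MemLp g 2 volume)
    (heq1 : ∀ x, lam * v x + v' x - u' x = 0) :
    (lam * (∫ x, u x * (starRingEnd ℂ) (v' x))
        + (∫ x, u' x * (starRingEnd ℂ) (v' x))).re
      = (∫ x, ‖u' x‖ ^ 2) - 2 * lam.re ^ 2 * (∫ x, ‖v x‖ ^ 2) := by
  have hu2 : MemLp u 2 volume := hL2 u (by simp)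
  have hu'2 : MemLp u' 2 volume := hL2 u' (by simp)
  have hv2 : MemLp v 2 volume := hL2 v (by simp)
  have hv'2 : MemLp v' 2 volume := hL2 v' (by simp)
  set W := ∫ x, v' x * conj (v x)
  have hW : W.re = 0 := re_integral_deriv_mul_conj_self_eq_zero hvd1 hv2 hv'2
  have hu'v : ∫ x, u' x * conj (v x) = lam * ((∫ x, ‖v x‖ ^ 2 : ℝ) : ℂ) + W := by
    have h : ∀ x, u' x * conj (v x) = lam * (v x * conj (v x)) + v' x * conj (v x) := fun x => by
      linear_combination -conj (v x) * heq1 x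
    simp_rw [h]
    rw [integral_add ((hv2.integrable_mul_conj hv2).const_mul lam)
      (hv'2.integrable_mul_conj hv2), integral_const_mul, integral_mul_conj_self_eq_ofReal]
  have hu'v' : ∫ x, u' x * conj (v' x)
      = ((∫ x, ‖u' x‖ ^ 2 : ℝ) : ℂ) - conj lam * ∫ x, u' x * conj (v x) := by
    have h : ∀ x, u' x * conj (v' x) = u' x * conj (u' x) - conj lam * (u' x * conj (v x)) :=
      fun x => by
        rw [show v' x = u' x - lam * v x by linear_combination heq1 x]
        simp only [map_sub, map_mul]; ring
    simp_rw [h]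
    rw [integral_sub (hu'2.integrable_mul_conj hu'2)
      ((hu'2.integrable_mul_conj hv2).const_mul _), integral_const_mul,
      integral_mul_conj_self_eq_ofReal]
  rw [integral_mul_conj_deriv_eq_neg hud1 hvd1 hu2 hu'2 hv2 hv'2, hu'v', hu'v]
  simp only [Complex.add_re, Complex.sub_re, Complex.neg_re, Complex.mul_re, Complex.neg_im,
    Complex.add_im, Complex.mul_im, Complex.conj_re, Complex.conj_im, Complex.ofReal_re,
    Complex.ofReal_im, hW]
  ring

/-- For a shock profile of Slemrod's model, `λ ∈ ℂ`, and a
solution `(u, v)` of the integrated eigenvalue system, the identity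
`Re[λ ∫ u conj(v') + ∫ u' conj(v')] = ∫ |u'|² − 2 (Re λ)² ∫ |v|²` holds. -/
theorem kawashima_key_identity
    (p p' p'' : ℝ → ℝ)
    (hp'd : ∀ s ∈ Ioi (0:ℝ), HasDerivAt p (p' s) s)
    (hp''d : ∀ s ∈ Ioi (0:ℝ), HasDerivAt p' (p'' s) s)
    (hp''cont : ContinuousOn p'' (Ioi 0))
    (hp'neg : ∀ s ∈ Ioi (0:ℝ), p' s < 0)
    (hp''pos : ∀ s ∈ Ioi (0:ℝ), 0 < p'' s)
    (vp vm a d : ℝ)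
    (hvp : 0 < vp) (hvlt : vp < vm) (hd : 0 ≤ d)
    (ha : a = -(vp - vm) / (p vp - p vm))
    (vhat vhat' vhat'' : ℝ → ℝ)
    (hpos : ∀ x, 0 < vhat x)
    (hder1 : ∀ x, HasDerivAt vhat (vhat' x) x)
    (hder2 : ∀ x, HasDerivAt vhat' (vhat'' x) x)
    (hprof : ∀ x, vhat x - vm + a * (p (vhat x) - p vm) = vhat' x / vhat x - d * vhat'' x)
    (hlim_m : Tendsto vhat atBot (𝓝 vm))
    (hlim_p : Tendsto vhat atTop (𝓝 vp))
    (hlimd_m : Tendsto vhat' atBot (𝓝 0))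
    (hlimd_p : Tendsto vhat' atTop (𝓝 0))
    (lam : ℂ)
    (u u' u'' v v' v'' v''' : ℝ → ℂ)
    (hud1 : ∀ x, HasDerivAt u (u' x) x)
    (hud2 : ∀ x, HasDerivAt u' (u'' x) x)
    (hvd1 : ∀ x, HasDerivAt v (v' x) x)
    (hvd2 : ∀ x, HasDerivAt v' (v'' x) x)
    (hvd3 : ∀ x, HasDerivAt v'' (v''' x) x)
    (hL2 : ∀ g ∈ ([u, u', u'', v, v', v'', v'''] : List (ℝ → ℂ)),
      MemLp g 2 volume)
    (hdecay : ∀ g ∈ ([u, u', u'', v, v', v'', v'''] : List (ℝ → ℂ)),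
      Tendsto g atTop (𝓝 0) ∧ Tendsto g atBot (𝓝 0))
    (heq1 : ∀ x, lam * v x + v' x - u' x = 0)
    (heq2 : ∀ x, lam * u x + u' x
        - ((-a * p' (vhat x) - vhat' x / (vhat x) ^ 2 : ℝ) : ℂ) * v' x
      = u'' x / ((vhat x : ℝ) : ℂ) - (d : ℂ) * v''' x) :
    (lam * (∫ x, u x * (starRingEnd ℂ) (v' x))
        + (∫ x, u' x * (starRingEnd ℂ) (v' x))).re
      = (∫ x, ‖u' x‖ ^ 2) - 2 * lam.re ^ 2 * (∫ x, ‖v x‖ ^ 2) :=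
  kawashima_key_identity_general lam u u' u'' v v' v'' v''' hud1 hvd1 hL2 heq1
end
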